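/- arXiv:1702.02544 — 8 statements merged into one kernel-verified Lean document; each statement's English description precedes it below -/
import Mathlib

section
/- Let (X, μ, T) be an invertible measure-preserving system with μ a probability measure, let A ⊆ X be measurable with μ(A) > 0, let L ≥ 1 and b be a nonzero integer. Then there exists m with 1 ≤ m ≤ ⌊1/μ(A)^L⌋ + 1 such that for every i with 1 ≤ i ≤ L, μ(A ∩ T^{-imb} A) > 0. -/
/-!
Quantitative Poincaré recurrence, applied to the product system
`(x_j)_j ↦ (T^{(j+1)b} x_j)_j` on `X^L` and the box `A^L` of measure `a = μ(A)^L`: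
the preimages of the box under the iterates `0, 1, …, ⌊1/a⌋` have total measure
`(⌊1/a⌋ + 1) a > 1`, so two of them overlap with positive measure, which yields a return
time `m ≤ ⌊1/a⌋` of the box. Such an `m` is a common return time of `A` under
`T^b, T^{2b}, …, T^{Lb}`.
-/

open MeasureTheory ENNReal

theorem MeasureTheory.exists_measure_inter_pos_of_measure_univ_lt_sum_measure
    {α ι : Type*} [MeasurableSpace α] (μ : Measure α) {s : Finset ι} {t : ι → Set α}
    (h : ∀ i ∈ s, NullMeasurableSet (t i) μ) (H : μ Set.univ < ∑ i ∈ s, μ (t i)) :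
    ∃ i ∈ s, ∃ j ∈ s, i ≠ j ∧ 0 < μ (t i ∩ t j) := by
  contrapose! H
  exact sum_measure_le_measure_univ h fun i hi j hj hij => nonpos_iff_eq_zero.mp (H i hi j hj hij)

theorem ENNReal.one_lt_floor_one_div_toReal_add_one_mul {a : ℝ≥0∞} (h0 : a ≠ 0) (htop : a ≠ ∞) :
    1 < ((⌊1 / a.toReal⌋₊ + 1 : ℕ) : ℝ≥0∞) * a := by
  have ha : 0 < a.toReal := toReal_pos h0 htop
  have hreal : 1 < ((⌊1 / a.toReal⌋₊ + 1 : ℕ) : ℝ) * a.toReal := by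
    calc (1 : ℝ) = 1 / a.toReal * a.toReal := by field_simp
      _ < _ := by gcongr; push_cast; exact Nat.lt_floor_add_one _
  rwa [← toReal_lt_toReal one_ne_top (mul_ne_top (natCast_ne_top _) htop), toReal_mul,
    toReal_natCast, toReal_one]

namespace MeasureTheory.MeasurePreserving

variable {α : Type*} [MeasurableSpace α] {μ : Measure α} {f : α → α}

theorem measure_preimage_iterate_inter_preimage_iterate (hf : MeasurePreserving f μ μ)
    {s : Set α} (hs : NullMeasurableSet s μ) {i j : ℕ} (hij : i ≤ j) :
    μ (f^[i] ⁻¹' s ∩ f^[j] ⁻¹' s) = μ (s ∩ f^[j - i] ⁻¹' s) := by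
  obtain ⟨k, rfl⟩ := Nat.exists_eq_add_of_le' hij
  rw [Nat.add_sub_cancel, Function.iterate_add, Set.preimage_comp, ← Set.preimage_inter,
    (hf.iterate i).measure_preimage (hs.inter (hs.preimage (hf.iterate k).quasiMeasurePreserving))]

theorem exists_measure_inter_preimage_iterate_pos [IsProbabilityMeasure μ]
    (hf : MeasurePreserving f μ μ) {s : Set α} (hs : NullMeasurableSet s μ) (hpos : 0 < μ s) :
    ∃ m : ℕ, 1 ≤ m ∧ m ≤ ⌊1 / (μ s).toReal⌋₊ ∧ 0 < μ (s ∩ f^[m] ⁻¹' s) := by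
  have hsum : μ Set.univ < ∑ k ∈ Finset.range (⌊1 / (μ s).toReal⌋₊ + 1), μ (f^[k] ⁻¹' s) := by
    simp_rw [(hf.iterate _).measure_preimage hs, Finset.sum_const, Finset.card_range, nsmul_eq_mul,
      measure_univ]
    exact one_lt_floor_one_div_toReal_add_one_mul hpos.ne' (measure_ne_top μ s)
  obtain ⟨i, hi, j, hj, hij, hoverlap⟩ := exists_measure_inter_pos_of_measure_univ_lt_sum_measure μ
    (fun k _ => hs.preimage (hf.iterate k).quasiMeasurePreserving) hsum
  simp only [Finset.mem_range] at hi hj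
  rcases hij.lt_or_gt with hlt | hlt
  · refine ⟨j - i, by omega, by omega, ?_⟩
    rwa [← hf.measure_preimage_iterate_inter_preimage_iterate hs hlt.le]
  · refine ⟨i - j, by omega, by omega, ?_⟩
    rwa [← hf.measure_preimage_iterate_inter_preimage_iterate hs hlt.le, Set.inter_comm]

end MeasureTheory.MeasurePreserving

theorem Equiv.Perm.measurePreserving_zpow {X : Type*} [MeasurableSpace X] {μ : Measure X}
    {T : Equiv.Perm X} (hT : MeasurePreserving T μ μ) (hT' : Measurable T.symm) (n : ℤ) :
    MeasurePreserving ⇑(T ^ n) μ μ := by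
  have hsymm : MeasurePreserving T.symm μ μ :=
    MeasurePreserving.symm (⟨T, hT.measurable, hT'⟩ : X ≃ᵐ X) hT
  rcases n with n | n
  · rw [Int.ofNat_eq_natCast, zpow_natCast, Equiv.Perm.coe_pow]
    exact hT.iterate n
  · rw [zpow_negSucc, ← inv_pow, Equiv.Perm.coe_pow]
    exact hsymm.iterate (n + 1)

theorem multiple_recurrence_progression_general
    {X : Type*} [MeasurableSpace X] (μ : Measure X) [IsProbabilityMeasure μ]
    (T : Equiv.Perm X) (hT' : Measurable T.symm)
    (hTμ : MeasurePreserving T μ μ)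
    (A : Set X) (hA : MeasurableSet A) (hpos : 0 < μ A)
    (L : ℕ) (b : ℤ) :
    ∃ m : ℕ, 1 ≤ m ∧ m ≤ Nat.floor (1 / (μ A).toReal ^ L) + 1 ∧
      ∀ i : ℕ, 1 ≤ i → i ≤ L →
        0 < μ (A ∩ ⇑(T ^ ((i : ℤ) * (m : ℤ) * b)) ⁻¹' A) := by
  set F := Pi.map fun j : Fin L => ⇑(T ^ (((j : ℕ) + 1 : ℤ) * b))
  have hF : MeasurePreserving F (Measure.pi fun _ => μ) (Measure.pi fun _ => μ) :=
    measurePreserving_pi _ _ fun j => Equiv.Perm.measurePreserving_zpow hTμ hT' _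
  have hbox : Measure.pi (fun _ => μ) (Set.univ.pi fun _ : Fin L => A) = μ A ^ L := by
    simp [Measure.pi_pi]
  obtain ⟨m, hm1, hmN, hrec⟩ := hF.exists_measure_inter_preimage_iterate_pos
    (MeasurableSet.univ_pi fun _ => hA).nullMeasurableSet (hbox ▸ ENNReal.pow_pos hpos L)
  rw [hbox, toReal_pow] at hmN
  have hpreimage : F^[m] ⁻¹' Set.univ.pi (fun _ => A) =
      Set.univ.pi fun j : Fin L => ⇑(T ^ (((j : ℕ) + 1 : ℤ) * m * b)) ⁻¹' A := by
    ext x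
    simp [F, ← Equiv.Perm.coe_pow, ← zpow_natCast, ← zpow_mul, mul_right_comm]
  rw [hpreimage, ← Set.pi_inter_distrib, Measure.pi_pi, CanonicallyOrderedAdd.prod_pos] at hrec
  refine ⟨m, hm1, Nat.le_succ_of_le hmN, fun i hi1 hiL => ?_⟩
  have hi : ((i - 1 : ℕ) : ℤ) + 1 = i := by omega
  simpa only [hi] using hrec ⟨i - 1, by omega⟩ (Finset.mem_univ _)

/-- Multiple recurrence along an arithmetic progression: the progression
`{mb, 2mb, …, Lmb}` is contained in the return-time set of `A`, with
`m ≤ ⌊1/μ(A)^L⌋ + 1`. -/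
theorem multiple_recurrence_progression
    {X : Type*} [MeasurableSpace X] (μ : Measure X) [IsProbabilityMeasure μ]
    (T : Equiv.Perm X) (hT : Measurable T) (hT' : Measurable T.symm)
    (hTμ : MeasurePreserving T μ μ)
    (A : Set X) (hA : MeasurableSet A) (hpos : 0 < μ A)
    (L : ℕ) (hL : 1 ≤ L) (b : ℤ) (hb : b ≠ 0) :
    ∃ m : ℕ, 1 ≤ m ∧ m ≤ Nat.floor (1 / (μ A).toReal ^ L) + 1 ∧
      ∀ i : ℕ, 1 ≤ i → i ≤ L →
        0 < μ (A ∩ ⇑(T ^ ((i : ℤ) * (m : ℤ) * b)) ⁻¹' A) :=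
  multiple_recurrence_progression_general μ T hT' hTμ A hA hpos L b
end

section
/- Let (X, μ, T) and (Y, ν, S) be invertible measure-preserving systems with probability measures, and let A ⊆ X, B ⊆ Y be measurable with μ(A) > 0 and ν(B) > 0. Then there exists a positive integer k, bounded above by a constant depending only on μ(A) and ν(B), such that every element of kℤ is a product r·s with r ∈ R(A) and s ∈ R(B), where R(A) = {n ∈ ℤ : μ(A ∩ T^n A) > 0} and R(B) = {n ∈ ℤ : ν(B ∩ S^n B) > 0}. -/
/-!
If `N` sets of measure at least `a` in a probability space satisfy `N * a > 1`, two of them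
meet in positive measure. For the sets `T^{g j} A`, `j < N`, this yields a return time `g d`
with `0 < d < N`; for the sets `∏ t, T^{g t * j} A` in the product space `X^ι` it yields one `d`
that is a return time of every dilate `g t` at once.

Take `b > 1/ν(B)`, `a > 1/μ(A)^b` and `k = b! * a!`. For `n = k m`, first find `d < a` with
`m * (b!/c) * d ∈ R(A)` for all `c < b`, then `0 < c < b` with `(a!/d) * c ∈ R(B)`; their
product is `m * b! * a! = n`.
-/

open MeasureTheory Set Function
open scoped ENNReal Nat

theorem Equiv.Perm.image_zpow_eq_preimage {X : Type*} (T : Equiv.Perm X) (z : ℤ) (s : Set X) :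
    ⇑(T ^ z) '' s = ⇑(T ^ (-z)) ⁻¹' s := by
  rw [Equiv.image_eq_preimage_symm, zpow_neg, Equiv.Perm.inv_def]

section Recurrence

variable {X : Type*} [MeasurableSpace X] {μ : Measure X}

theorem exists_lt_measure_inter_pos {C : ℕ → Set X} {N : ℕ} {a : ℝ≥0∞}
    (hC : ∀ j < N, NullMeasurableSet (C j) μ) (ha : ∀ j < N, a ≤ μ (C j))
    (hN : μ univ < N * a) : ∃ i j, i < j ∧ j < N ∧ 0 < μ (C i ∩ C j) := by
  by_contra! h
  have hdisj : (Finset.range N : Set ℕ).Pairwise (AEDisjoint μ on C) := by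
    intro i hi j hj hij
    simp only [Finset.coe_range, mem_Iio] at hi hj
    rcases hij.lt_or_gt with hij | hij
    · exact le_antisymm (h i j hij hj) bot_le
    · exact le_antisymm (inter_comm (C i) (C j) ▸ h j i hij hi) bot_le
  have hunion := measure_biUnion_finset₀ hdisj fun j hj => hC j (Finset.mem_range.1 hj)
  refine (hN.trans_le ?_).false
  calc (N : ℝ≥0∞) * a = ∑ _j ∈ Finset.range N, a := by simp
    _ ≤ ∑ j ∈ Finset.range N, μ (C j) :=
      Finset.sum_le_sum fun j hj => ha j (Finset.mem_range.1 hj)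
    _ = μ (⋃ j ∈ Finset.range N, C j) := hunion.symm
    _ ≤ μ univ := measure_mono (subset_univ _)

theorem measurePreserving_perm_zpow {T : Equiv.Perm X} (hT : MeasurePreserving T μ μ)
    (hT' : Measurable T.symm) (z : ℤ) : MeasurePreserving ⇑(T ^ z) μ μ := by
  let e : X ≃ᵐ X := ⟨T, hT.measurable, hT'⟩
  have hinv : MeasurePreserving ⇑T⁻¹ μ μ := hT.symm e
  induction z using Int.induction_on with
  | zero => exact MeasurePreserving.id μ
  | succ z ih => rw [zpow_add_one, Equiv.Perm.coe_mul]; exact ih.comp hT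
  | pred z ih => rw [zpow_sub_one, Equiv.Perm.coe_mul]; exact ih.comp hinv

variable {T : Equiv.Perm X}

theorem measure_perm_zpow_image (hT : ∀ z : ℤ, MeasurePreserving ⇑(T ^ z) μ μ) (z : ℤ)
    (s : Set X) : μ (⇑(T ^ z) '' s) = μ s := by
  let e : X ≃ᵐ X :=
    ⟨T ^ (-z), (hT _).measurable, by simpa [← Equiv.Perm.inv_def] using (hT z).measurable⟩
  rw [T.image_zpow_eq_preimage]
  exact (hT (-z)).measure_preimage_equiv (f := e) s

theorem measure_perm_zpow_image_inter (hT : ∀ z : ℤ, MeasurePreserving ⇑(T ^ z) μ μ)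
    (a b : ℤ) (s : Set X) :
    μ (⇑(T ^ a) '' s ∩ ⇑(T ^ b) '' s) = μ (s ∩ ⇑(T ^ (b - a)) '' s) := by
  have hb : ⇑(T ^ b) '' s = ⇑(T ^ a) '' (⇑(T ^ (b - a)) '' s) := by
    rw [← image_comp, ← Equiv.Perm.coe_mul, ← zpow_add, add_sub_cancel]
  rw [hb, ← image_inter (T ^ a).injective, measure_perm_zpow_image hT]

theorem exists_common_return_time [IsProbabilityMeasure μ] {ι : Type*} [Fintype ι]
    (hT : ∀ z : ℤ, MeasurePreserving ⇑(T ^ z) μ μ) {A : Set X} (hA : MeasurableSet A)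
    (g : ι → ℤ) {N : ℕ} (hN : 1 < N * μ A ^ Fintype.card ι) :
    ∃ d : ℕ, 0 < d ∧ d < N ∧ ∀ t, 0 < μ (A ∩ ⇑(T ^ (g t * d)) '' A) := by
  let C : ℕ → Set (ι → X) := fun j => univ.pi fun t => ⇑(T ^ (g t * j)) '' A
  have hC : ∀ j, MeasurableSet (C j) := fun j =>
    MeasurableSet.univ_pi fun t => by
      rw [T.image_zpow_eq_preimage]; exact (hT _).measurable hA
  have hmeasure : ∀ j, Measure.pi (fun _ => μ) (C j) = μ A ^ Fintype.card ι := fun j => by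
    simp [C, Measure.pi_pi, measure_perm_zpow_image hT]
  obtain ⟨i, j, hij, hjN, hpos⟩ := exists_lt_measure_inter_pos (μ := Measure.pi fun _ => μ)
    (fun j _ => (hC j).nullMeasurableSet) (fun j _ => (hmeasure j).ge) (by simpa using hN)
  refine ⟨j - i, Nat.sub_pos_of_lt hij, (Nat.sub_le j i).trans_lt hjN, fun t => ?_⟩
  rw [← pi_inter_distrib, Measure.pi_pi] at hpos
  have := (Finset.prod_ne_zero_iff.1 hpos.ne' t (Finset.mem_univ t)).bot_lt
  rwa [measure_perm_zpow_image_inter hT, ← mul_sub, ← Nat.cast_sub hij.le] at this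

end Recurrence

noncomputable def invBound (x : ℝ) : ℕ := ⌊x⁻¹⌋₊ + 1

theorem one_lt_invBound_toReal_mul {x : ℝ≥0∞} (h0 : x ≠ 0) (htop : x ≠ ⊤) :
    1 < (invBound x.toReal : ℝ≥0∞) * x := by
  have hx : 0 < x.toReal := ENNReal.toReal_pos h0 htop
  have hreal : 1 < (invBound x.toReal : ℝ) * x.toReal := by
    calc (1 : ℝ) = x.toReal⁻¹ * x.toReal := (inv_mul_cancel₀ hx.ne').symm
      _ < (invBound x.toReal : ℝ) * x.toReal := by
        gcongr; simpa [invBound] using Nat.lt_floor_add_one x.toReal⁻¹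
  rwa [← ENNReal.toReal_lt_toReal ENNReal.one_ne_top (by finiteness), ENNReal.toReal_mul,
    ENNReal.toReal_natCast, ENNReal.toReal_one]

noncomputable def returnTimeBound (a b : ℝ) : ℕ :=
  (invBound b)! * (invBound (a ^ invBound b))!

/-- Main theorem: there is a bound `K`, depending only on `μ(A)` and `ν(B)`, and a
positive `k ≤ K (μ A) (ν B)` such that `kℤ ⊆ R(A) · R(B)`. -/
theorem kZ_subset_return_times_product :
    ∃ K : ℝ → ℝ → ℕ,
      ∀ (X Y : Type) (_ : MeasurableSpace X) (_ : MeasurableSpace Y)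
        (μ : Measure X) (ν : Measure Y),
        IsProbabilityMeasure μ → IsProbabilityMeasure ν →
        ∀ (T : Equiv.Perm X) (S : Equiv.Perm Y),
          Measurable T → Measurable T.symm → MeasurePreserving T μ μ →
          Measurable S → Measurable S.symm → MeasurePreserving S ν ν →
          ∀ (A : Set X) (B : Set Y), MeasurableSet A → MeasurableSet B →
            0 < μ A → 0 < ν B →
            ∃ k : ℕ, 0 < k ∧ k ≤ K (μ A).toReal (ν B).toReal ∧
              ∀ n : ℤ, (k : ℤ) ∣ n →
                ∃ r s : ℤ, 0 < μ (A ∩ ⇑(T ^ r) '' A) ∧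
                  0 < ν (B ∩ ⇑(S ^ s) '' B) ∧ n = r * s := by
  refine ⟨returnTimeBound, ?_⟩
  intro X Y _ _ μ ν _ _ T S _ hT' hT _ hS' hS A B hA hB hμA hνB
  set b := invBound (ν B).toReal
  set a := invBound ((μ A).toReal ^ b)
  refine ⟨b ! * a !, by positivity, le_rfl, ?_⟩
  rintro n ⟨m, rfl⟩
  have hA_count : 1 < (a : ℝ≥0∞) * μ A ^ Fintype.card (Fin b) := by
    simpa [a, ENNReal.toReal_pow] using
      one_lt_invBound_toReal_mul (pow_ne_zero b hμA.ne') (by finiteness : μ A ^ b ≠ ⊤)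
  have hB_count : 1 < (b : ℝ≥0∞) * ν B ^ Fintype.card Unit := by
    simpa [b] using one_lt_invBound_toReal_mul hνB.ne' (by finiteness)
  obtain ⟨d, hd, hda, hAret⟩ := exists_common_return_time (measurePreserving_perm_zpow hT hT')
    hA (fun c : Fin b => m * (b ! / c : ℕ)) hA_count
  obtain ⟨c, hc, hcb, hBret⟩ := exists_common_return_time (measurePreserving_perm_zpow hS hS')
    hB (fun _ : Unit => (a ! / d : ℕ)) hB_count
  refine ⟨m * (b ! / c : ℕ) * d, (a ! / d : ℕ) * c, hAret ⟨c, hcb⟩, hBret (), ?_⟩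
  have hbc : ((b ! / c : ℕ) : ℤ) * c = b ! := by
    exact_mod_cast Nat.div_mul_cancel (Nat.dvd_factorial hc hcb.le)
  have had : ((a ! / d : ℕ) : ℤ) * d = a ! := by
    exact_mod_cast Nat.div_mul_cancel (Nat.dvd_factorial hd hda.le)
  rw [Nat.cast_mul]
  linear_combination (-(m * a !)) * hbc - m * ((b ! / c : ℕ) : ℤ) * c * had
end

section
/- For every α > 0 and β > 0 there exists k₀ such that: if E₁, E₂ ⊆ ℤ have upper Banach densities d*(E₁) ≥ α and d*(E₂) ≥ β, then there exists a positive integer k ≤ k₀ with kℤ ⊆ (E₁ − E₁)·(E₂ − E₂). -/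
open MeasureTheory

/-- Upper Banach density of a set of integers. -/
noncomputable def upperBanachDensity (E : Set ℤ) : ℝ :=
  Filter.limsup
    (fun N : ℕ => ⨆ a : ℤ, ((E ∩ Set.Ico a (a + N)).ncard : ℝ) / N)
    Filter.atTop

private lemma dense_scales (E : Set ℤ) (δ : ℝ) (hδ : 0 < δ)
    (h : 2 * δ ≤ upperBanachDensity E) (M : ℕ) :
    ∃ N, M ≤ N ∧ ∃ a : ℤ, δ * N ≤ ((E ∩ Set.Ico a (a + N)).ncard : ℝ) := by
  rw [upperBanachDensity] at h
  have hcb : Filter.IsCoboundedUnder (· ≤ ·) Filter.atTop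
      (fun N : ℕ => ⨆ a : ℤ, ((E ∩ Set.Ico a (a + N)).ncard : ℝ) / N) :=
    Filter.isCoboundedUnder_le_of_le Filter.atTop
      (fun N => Real.iSup_nonneg fun a => by positivity)
  have hfreq : ∃ᶠ N : ℕ in Filter.atTop,
      δ < ⨆ a : ℤ, ((E ∩ Set.Ico a (a + N)).ncard : ℝ) / N :=
    Filter.frequently_lt_of_lt_limsup hcb (lt_of_lt_of_le (by linarith) h)
  obtain ⟨N, hNM, hN⟩ := Filter.frequently_atTop.mp hfreq M
  obtain ⟨a, ha⟩ := exists_lt_of_lt_ciSup hN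
  refine ⟨N, hNM, a, ?_⟩
  rcases Nat.eq_zero_or_pos N with h0' | h0'
  · subst h0'; simp at ha; linarith
  · have hNpos : (0:ℝ) < N := by exact_mod_cast h0'
    have := (lt_div_iff₀ hNpos).mp ha
    linarith

private lemma grid_lemma (E : Set ℤ) (δ : ℝ) (hδ : 0 < δ)
    (hd : ∀ M : ℕ, ∃ N, M ≤ N ∧ ∃ a : ℤ, δ * N ≤ ((E ∩ Set.Ico a (a + N)).ncard : ℝ))
    (Q : ℕ) (v : Fin Q → ℤ) (K : ℕ) (hK : (2 / δ) ^ Q ≤ (K : ℝ)) :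
    ∃ s : ℕ, 0 < s ∧ s ≤ K ∧ ∀ j : Fin Q, ∃ x ∈ E, ∃ y ∈ E, x - y = (s : ℤ) * v j := by
  classical
  rcases Nat.eq_zero_or_pos Q with hQ | hQ
  · subst hQ
    have h1 : (1:ℝ) ≤ (K:ℝ) := by simpa using hK
    exact ⟨1, one_pos, by exact_mod_cast h1, fun j => j.elim0⟩
  set V : ℕ := Finset.univ.sup fun j : Fin Q => (v j).natAbs with hV
  obtain ⟨N, hNge, a, hcard⟩ := hd (2 * (K * V) + 1)
  have hfin : (E ∩ Set.Ico a (a + N)).Finite :=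
    (Set.finite_Ico a (a + N)).subset Set.inter_subset_right
  set A : Finset ℤ := hfin.toFinset with hA
  have hAcard : δ * N ≤ (A.card : ℝ) := by
    rwa [Set.ncard_eq_toFinset_card _ hfin] at hcard
  set T : Finset ℤ := Finset.Ico (a - (K * V : ℕ)) (a + N + (K * V : ℕ)) with hT
  have hmem : ∀ (p : (Fin Q → A) × Fin (K + 1)) (j : Fin Q),
      ((p.1 j : ℤ) + ((p.2 : ℕ) : ℤ) * v j) ∈ T := by
    intro p j
    have hx : (p.1 j : ℤ) ∈ E ∩ Set.Ico a (a + N) := hfin.mem_toFinset.mp (p.1 j).2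
    have hx1 : a ≤ (p.1 j : ℤ) := hx.2.1
    have hx2 : (p.1 j : ℤ) < a + N := hx.2.2
    have hvb : |v j| ≤ (V : ℤ) := by
      have h' : (v j).natAbs ≤ V :=
        Finset.le_sup (f := fun j : Fin Q => (v j).natAbs) (Finset.mem_univ j)
      rw [Int.abs_eq_natAbs]
      exact_mod_cast h' 
    have hib : ((p.2 : ℕ) : ℤ) ≤ (K : ℤ) := by
      exact_mod_cast Nat.lt_succ_iff.mp p.2.isLt
    have habs : |((p.2 : ℕ) : ℤ) * v j| ≤ ((K * V : ℕ) : ℤ) := by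
      rw [abs_mul, abs_of_nonneg (by positivity : (0:ℤ) ≤ ((p.2 : ℕ) : ℤ))]
      push_cast
      exact mul_le_mul hib hvb (abs_nonneg _) (by positivity)
    rcases abs_le.mp habs with ⟨hl, hr⟩
    rw [Finset.mem_Ico]
    constructor
    · linarith
    · linarith
  have hcardlt : Fintype.card (Fin Q → T) < Fintype.card ((Fin Q → A) × Fin (K + 1)) := by
    have e1 : Fintype.card ((Fin Q → A) × Fin (K + 1)) = A.card ^ Q * (K + 1) := by
      simp [Fintype.card_fun]
    have e2 : Fintype.card (Fin Q → T) = T.card ^ Q := by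
      simp [Fintype.card_fun]
    rw [e1, e2]
    have hTcard : T.card = N + 2 * (K * V) := by
      rw [hT, Int.card_Ico]
      have : a + (N:ℤ) + ((K * V : ℕ) : ℤ) - (a - ((K * V : ℕ) : ℤ))
          = ((N + 2 * (K * V) : ℕ) : ℤ) := by push_cast; ring
      rw [this, Int.toNat_natCast]
    have hNR : 2 * ((K:ℝ) * V) < (N:ℝ) := by exact_mod_cast by omega
    have h1 : ((T.card : ℝ)) ^ Q < ((2:ℝ) * N) ^ Q := by
      apply pow_lt_pow_left₀ _ (by positivity) hQ.ne'
      rw [hTcard]; push_cast; linarith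
    have hdpow : (2:ℝ)^Q ≤ (K:ℝ) * δ^Q := by
      have hd2 : (2:ℝ)^Q / δ^Q ≤ (K:ℝ) := by rwa [div_pow] at hK
      have hδQ : (0:ℝ) < δ^Q := by positivity
      calc (2:ℝ)^Q = (2^Q/δ^Q) * δ^Q := by field_simp
      _ ≤ (K:ℝ) * δ^Q := mul_le_mul_of_nonneg_right hd2 (le_of_lt hδQ)
    have h2 : ((2:ℝ) * N) ^ Q ≤ (A.card : ℝ) ^ Q * (K + 1) := by
      calc ((2:ℝ)*N)^Q = 2^Q * (N:ℝ)^Q := by rw [mul_pow]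
      _ ≤ ((K:ℝ) * δ^Q) * (N:ℝ)^Q := mul_le_mul_of_nonneg_right hdpow (by positivity)
      _ = (δ*(N:ℝ))^Q * (K:ℝ) := by rw [mul_pow]; ring
      _ ≤ (A.card:ℝ)^Q * ((K:ℝ) + 1) := by
          apply mul_le_mul (pow_le_pow_left₀ (by positivity) hAcard Q)
            (by linarith) (by positivity) (by positivity)
    have hfin2 : ((T.card:ℝ))^Q < (A.card:ℝ)^Q * ((K:ℝ)+1) := lt_of_lt_of_le h1 h2
    exact_mod_cast hfin2
  obtain ⟨p, q, hpq, heq⟩ := Fintype.exists_ne_map_eq_of_card_lt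
    (fun p : (Fin Q → A) × Fin (K+1) =>
      (fun j => (⟨(p.1 j : ℤ) + ((p.2 : ℕ) : ℤ) * v j, hmem p j⟩ : T))) hcardlt
  have key : ∀ j : Fin Q,
      (p.1 j : ℤ) + ((p.2 : ℕ) : ℤ) * v j = (q.1 j : ℤ) + ((q.2 : ℕ) : ℤ) * v j := by
    intro j
    exact Subtype.ext_iff.mp (congrFun heq j)
  have hmemE : ∀ (r : (Fin Q → A) × Fin (K+1)) (j : Fin Q), (r.1 j : ℤ) ∈ E :=
    fun r j => (hfin.mem_toFinset.mp (r.1 j).2).1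
  have hne : (p.2 : ℕ) ≠ (q.2 : ℕ) := by
    intro hii
    apply hpq
    have h2 : p.2 = q.2 := Fin.ext hii
    have h1 : p.1 = q.1 := by
      funext j
      have hk := key j
      rw [hii] at hk
      exact Subtype.ext (by linarith)
    exact Prod.ext h1 h2
  rcases hne.lt_or_gt with hlt | hlt
  · refine ⟨(q.2 : ℕ) - (p.2 : ℕ), by omega, by have := q.2.isLt; omega, fun j => ?_⟩
    refine ⟨(p.1 j : ℤ), hmemE p j, (q.1 j : ℤ), hmemE q j, ?_⟩
    have hc : (((q.2 : ℕ) - (p.2 : ℕ) : ℕ) : ℤ) = ((q.2 : ℕ) : ℤ) - ((p.2 : ℕ) : ℤ) := by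
      omega
    rw [hc]
    linear_combination key j
  · refine ⟨(p.2 : ℕ) - (q.2 : ℕ), by omega, by have := p.2.isLt; omega, fun j => ?_⟩
    refine ⟨(q.1 j : ℤ), hmemE q j, (p.1 j : ℤ), hmemE p j, ?_⟩
    have hc : (((p.2 : ℕ) - (q.2 : ℕ) : ℕ) : ℤ) = ((p.2 : ℕ) : ℤ) - ((q.2 : ℕ) : ℤ) := by
      omega
    rw [hc]
    linear_combination -key j

/-- For sets `E₁, E₂ ⊆ ℤ` of upper Banach density at least `α, β > 0`, there is
`k ≤ k₀(α, β)` positive with `kℤ ⊆ (E₁ - E₁) · (E₂ - E₂)`. -/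
theorem kZ_subset_diff_product (α β : ℝ) (hα : 0 < α) (hβ : 0 < β) :
    ∃ k₀ : ℕ, ∀ E₁ E₂ : Set ℤ,
      α ≤ upperBanachDensity E₁ → β ≤ upperBanachDensity E₂ →
      ∃ k : ℕ, 0 < k ∧ k ≤ k₀ ∧
        ∀ n : ℤ, (k : ℤ) ∣ n →
          ∃ x₁ ∈ E₁, ∃ y₁ ∈ E₁, ∃ x₂ ∈ E₂, ∃ y₂ ∈ E₂,
            n = (x₁ - y₁) * (x₂ - y₂) := by
  set K₂ : ℕ := ⌈(2/(β/2))^1⌉₊ with hK₂def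
  set Q : ℕ := K₂.factorial with hQdef
  set K₁ : ℕ := ⌈(2/(α/2))^Q⌉₊ with hK₁def
  refine ⟨Q * K₁, fun E₁ E₂ h₁ h₂ => ?_⟩
  have hd₁ := dense_scales E₁ (α/2) (by linarith) (by linarith)
  have hd₂ := dense_scales E₂ (β/2) (by linarith) (by linarith)
  obtain ⟨s₁, hs₁pos, hs₁le, hs₁⟩ :=
    grid_lemma E₁ (α/2) (by linarith) hd₁ Q (fun j => ((j : ℕ) : ℤ) + 1) K₁ (Nat.le_ceil _)
  have hQpos : 0 < Q := Nat.factorial_pos _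
  refine ⟨Q * s₁, Nat.mul_pos hQpos hs₁pos, Nat.mul_le_mul_left Q hs₁le, ?_⟩
  intro n hn
  obtain ⟨t, ht⟩ := hn
  obtain ⟨j₂, hj₂pos, hj₂le, hj₂⟩ :=
    grid_lemma E₂ (β/2) (by linarith) hd₂ 1 (fun _ => t) K₂ (Nat.le_ceil _)
  obtain ⟨x₂, hx₂, y₂, hy₂, he₂⟩ := hj₂ 0
  have hdvd : j₂ ∣ Q := Nat.dvd_factorial hj₂pos hj₂le
  have hm : Q / j₂ * j₂ = Q := Nat.div_mul_cancel hdvd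
  have hmpos : 0 < Q / j₂ := Nat.div_pos (hj₂le.trans (Nat.self_le_factorial _)) hj₂pos
  have hmle : Q / j₂ ≤ Q := Nat.div_le_self _ _
  obtain ⟨x₁, hx₁, y₁, hy₁, he₁⟩ := hs₁ ⟨Q / j₂ - 1, by omega⟩
  refine ⟨x₁, hx₁, y₁, hy₁, x₂, hx₂, y₂, hy₂, ?_⟩
  have he₁' : x₁ - y₁ = (s₁:ℤ) * (((Q / j₂ - 1 : ℕ) : ℤ) + 1) := he₁
  rw [he₁', he₂, ht]
  have e : ((Q / j₂ - 1 : ℕ) : ℤ) + 1 = ((Q / j₂ : ℕ) : ℤ) := by omega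
  have e2 : ((Q / j₂ : ℕ) : ℤ) * (j₂ : ℤ) = (Q : ℤ) := by exact_mod_cast congrArg Nat.cast hm
  push_cast
  linear_combination (-(s₁:ℤ) * t) * e2 + (-((s₁:ℤ) * (j₂:ℤ) * t)) * e
end

section
/- For every α > 0 and β > 0 there exist N₀ and d₀, depending only on α and β, such that for every N ≥ N₀ and all sets E₁, E₂ ⊆ ℤ/Nℤ with |E₁| ≥ αN and |E₂| ≥ βN, there exists a divisor d of N with d ≤ d₀ such that every element of d·(ℤ/Nℤ) can be written as (a₁ − b₁)(a₂ − b₂) with a₁, b₁ ∈ E₁ and a₂, b₂ ∈ E₂. -/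
/-- Pigeonhole: if `(n+1)|A| > |G|`, then for any `t` some multiple `ρ • t`
with `1 ≤ ρ ≤ n` is a difference of two elements of `A`. -/
lemma pigeon_smul_mem_diff {G : Type*} [AddCommGroup G] [Fintype G] [DecidableEq G]
    (A : Finset G) (n : ℕ) (h : Fintype.card G < (n + 1) * A.card) (t : G) :
    ∃ ρ : ℕ, 1 ≤ ρ ∧ ρ ≤ n ∧ ∃ a ∈ A, ∃ b ∈ A, a - b = ρ • t := by
  have hcard : (Finset.univ : Finset G).card < ((Finset.range (n + 1)) ×ˢ A).card := by
    rw [Finset.card_product, Finset.card_range, Finset.card_univ]; exact h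
  obtain ⟨p, hp, q, hq, hne, heq⟩ :=
    Finset.exists_ne_map_eq_of_card_lt_of_maps_to (f := fun p : ℕ × G => p.2 + p.1 • t)
      hcard (fun a _ => Finset.mem_univ _)
  obtain ⟨hp1, hp2⟩ := Finset.mem_product.mp hp
  obtain ⟨hq1, hq2⟩ := Finset.mem_product.mp hq
  rw [Finset.mem_range] at hp1 hq1
  -- heq : p.2 + p.1 • t = q.2 + q.1 • t
  rcases lt_trichotomy p.1 q.1 with hlt | heqj | hlt
  · refine ⟨q.1 - p.1, by omega, by omega, p.2, hp2, q.2, hq2, ?_⟩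
    rw [sub_nsmul t hlt.le, ← sub_eq_add_neg, sub_eq_sub_iff_add_eq_add]
    rw [heq]
    exact add_comm _ _
  · exfalso
    apply hne
    have : p.2 = q.2 := by
      have := heq
      rw [heqj] at this
      exact add_right_cancel this
    exact Prod.ext heqj this
  · refine ⟨p.1 - q.1, by omega, by omega, q.2, hq2, p.2, hp2, ?_⟩
    rw [sub_nsmul t hlt.le, ← sub_eq_add_neg, sub_eq_sub_iff_add_eq_add]
    rw [← heq]
    exact add_comm _ _

/-- Simultaneous version: some `1 ≤ ρ ≤ n` works for all components at once. -/
lemma pigeon_smul_mem_diff_pi {G : Type*} [AddCommGroup G] [Fintype G] [DecidableEq G]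
    (A : Finset G) (k n : ℕ) (h : Fintype.card G ^ k < (n + 1) * A.card ^ k)
    (t : Fin k → G) :
    ∃ ρ : ℕ, 1 ≤ ρ ∧ ρ ≤ n ∧ ∀ i : Fin k, ∃ a ∈ A, ∃ b ∈ A, a - b = ρ • t i := by
  have hcard : Fintype.card (Fin k → G) < (n + 1) * (Fintype.piFinset fun _ : Fin k => A).card := by
    rw [Fintype.card_piFinset, Fintype.card_pi]
    simpa using h
  obtain ⟨ρ, h1, h2, a, ha, b, hb, hab⟩ :=
    pigeon_smul_mem_diff (Fintype.piFinset fun _ : Fin k => A) n hcard t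
  refine ⟨ρ, h1, h2, fun i => ⟨a i, Fintype.mem_piFinset.mp ha i, b i,
    Fintype.mem_piFinset.mp hb i, ?_⟩⟩
  have := congrFun hab i
  simpa using this

/-- For dense subsets `E₁, E₂` of `ℤ/Nℤ` with `N` large, some divisor `d ≤ d₀(α,β)`
of `N` satisfies `d·(ℤ/Nℤ) ⊆ (E₁ - E₁)·(E₂ - E₂)`. -/
theorem dZmod_subset_diff_product (α β : ℝ) (hα : 0 < α) (hβ : 0 < β) :
    ∃ N₀ d₀ : ℕ, ∀ N : ℕ, N₀ ≤ N →
      ∀ E₁ E₂ : Finset (ZMod N),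
        α * N ≤ E₁.card → β * N ≤ E₂.card →
        ∃ d : ℕ, d ∣ N ∧ d ≤ d₀ ∧
          ∀ x : ZMod N,
            ∃ a₁ ∈ E₁, ∃ b₁ ∈ E₁, ∃ a₂ ∈ E₂, ∃ b₂ ∈ E₂,
              (d : ZMod N) * x = (a₁ - b₁) * (a₂ - b₂) := by
  classical
  set k : ℕ := ⌈α⁻¹⌉₊ with hk
  set M : ℕ := ⌈β⁻¹⌉₊ with hM
  set L : ℕ := k.factorial with hL
  refine ⟨1, L * M ^ k, ?_⟩
  intro N hN E₁ E₂ h₁ h₂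
  haveI : NeZero N := ⟨by omega⟩
  have hNpos : 0 < N := hN
  have hNR : (0:ℝ) < N := by exact_mod_cast hNpos
  -- first pigeonhole bound for E₁
  have hcard1 : Fintype.card (ZMod N) < (k + 1) * E₁.card := by
    rw [ZMod.card]
    have hik : (α⁻¹ : ℝ) ≤ k := Nat.le_ceil _
    have h1 : (α⁻¹ : ℝ) < (k:ℝ) + 1 := by linarith
    have h2 : (1:ℝ) < ((k:ℝ) + 1) * α := by
      have := (inv_lt_iff_one_lt_mul₀ hα).mp h1
      linarith [this]
    have h3 : (N:ℝ) < ((k:ℝ) + 1) * E₁.card := by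
      have : ((k:ℝ) + 1) * (α * N) ≤ ((k:ℝ) + 1) * E₁.card :=
        mul_le_mul_of_nonneg_left h₁ (by positivity)
      nlinarith
    exact_mod_cast h3
  -- second (simultaneous) pigeonhole bound for E₂
  have hE₂pos : (0:ℝ) < E₂.card := lt_of_lt_of_le (by positivity) h₂
  have hcard2 : Fintype.card (ZMod N) ^ k < (M ^ k + 1) * E₂.card ^ k := by
    rw [ZMod.card]
    have hMβ : (1:ℝ) ≤ (M:ℝ) * β := by
      have : (β⁻¹ : ℝ) ≤ M := Nat.le_ceil _
      calc (1:ℝ) = β⁻¹ * β := (inv_mul_cancel₀ hβ.ne').symm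
        _ ≤ (M:ℝ) * β := mul_le_mul_of_nonneg_right this hβ.le
    have key : ((N:ℝ)) ^ k ≤ ((M:ℝ) * E₂.card) ^ k := by
      apply pow_le_pow_left₀ hNR.le
      calc (N:ℝ) = 1 * N := (one_mul _).symm
        _ ≤ ((M:ℝ) * β) * N := mul_le_mul_of_nonneg_right hMβ hNR.le
        _ = (M:ℝ) * (β * N) := by ring
        _ ≤ (M:ℝ) * E₂.card := mul_le_mul_of_nonneg_left h₂ (by positivity)
    have h3 : ((N:ℝ)) ^ k < ((M:ℝ) ^ k + 1) * E₂.card ^ k := by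
      have hpos : (0:ℝ) < E₂.card ^ k := by positivity
      calc ((N:ℝ)) ^ k ≤ ((M:ℝ) * E₂.card) ^ k := key
        _ = (M:ℝ) ^ k * E₂.card ^ k := by rw [mul_pow]
        _ < ((M:ℝ) ^ k + 1) * E₂.card ^ k := by nlinarith
    exact_mod_cast h3
  obtain ⟨ρ, hρ1, hρ2, hρ⟩ := pigeon_smul_mem_diff_pi E₂ k (M ^ k) hcard2
    (fun i => ((L / ((i : ℕ) + 1) : ℕ) : ZMod N))
  set d : ℕ := Nat.gcd (L * ρ) N with hd
  have hLρpos : 0 < L * ρ := Nat.mul_pos k.factorial_pos (by omega)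
  refine ⟨d, Nat.gcd_dvd_right _ _, ?_, ?_⟩
  · calc d ≤ L * ρ := Nat.gcd_le_left _ hLρpos
      _ ≤ L * M ^ k := Nat.mul_le_mul_left _ hρ2
  · intro x
    set w : ZMod N := ((Nat.gcdA (L * ρ) N : ℤ) : ZMod N) with hw
    have hbezout : ((L * ρ : ℕ) : ZMod N) * w = (d : ZMod N) := by
      have hb := Nat.gcd_eq_gcd_ab (L * ρ) N
      have : ((Nat.gcd (L * ρ) N : ℤ) : ZMod N)
          = (((L * ρ : ℕ) : ℤ) : ZMod N) * ((Nat.gcdA (L * ρ) N : ℤ) : ZMod N)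
            + ((N : ℤ) : ZMod N) * ((Nat.gcdB (L * ρ) N : ℤ) : ZMod N) := by
        rw [← Int.cast_mul, ← Int.cast_mul, ← Int.cast_add, ← hb]
      simp only [Int.cast_natCast, ZMod.natCast_self, zero_mul, add_zero] at this
      rw [hw, ← this, hd]
    obtain ⟨r, hr1, hr2, a₁, ha₁, b₁, hb₁, hab₁⟩ :=
      pigeon_smul_mem_diff E₁ k hcard1 (w * x)
    obtain ⟨a₂, ha₂, b₂, hb₂, hab₂⟩ := hρ ⟨r - 1, by omega⟩
    refine ⟨a₁, ha₁, b₁, hb₁, a₂, ha₂, b₂, hb₂, ?_⟩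
    have hfin : ((⟨r - 1, by omega⟩ : Fin k) : ℕ) + 1 = r := by simp; omega
    rw [hab₁, hab₂, hfin]
    have hrdvd : r ∣ L := Nat.dvd_factorial (by omega) hr2
    have hrL : r * (L / r) = L := Nat.mul_div_cancel' hrdvd
    rw [nsmul_eq_mul, nsmul_eq_mul]
    calc (d : ZMod N) * x = ((L * ρ : ℕ) : ZMod N) * w * x := by rw [hbezout]
      _ = ((r * (L / r) * ρ : ℕ) : ZMod N) * w * x := by rw [hrL]
      _ = (r : ZMod N) * (w * x) * ((ρ : ZMod N) * ((L / r : ℕ) : ZMod N)) := by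
          push_cast
          ring
end

section
/- For every α > 0 and β > 0 there exists p₀ such that for every prime p ≥ p₀ and all sets E₁, E₂ ⊆ ℤ/pℤ with |E₁| ≥ αp and |E₂| ≥ βp, every element of ℤ/pℤ can be written as (a₁ − b₁)(a₂ − b₂) with a₁, b₁ ∈ E₁ and a₂, b₂ ∈ E₂. -/
/-!
For `x ≠ 0`, orthogonality of additive characters expands `q²` times the number of solutions of
`x = (a₁ - b₁)(a₂ - b₂)` as `∑_{t,u} |Â(t)|² |B̂(u)|² K(-t, -ux)`, where `K` is a Kloosterman sum.
The term `t = u = 0` equals `(q - 1)|A|²|B|²`; by Parseval the remaining terms add up to at most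
`q²|A||B| · max |K|`. Away from `(0, 0)`, `|K|⁴ ≤ 3q³`: `K` is constant on the `q - 1` points
`(ac, b/c)`, and the fourth moment `∑ |K|⁴` is `q²` times the number of solutions of
`s₁ + s₂ = s₃ + s₄`, `1/s₁ + 1/s₂ = 1/s₃ + 1/s₄` in units, which is at most `3(q - 1)²`.
So every `x` is represented as soon as `((q - 1)|A||B|)⁴ > 3q¹¹`, which holds for sets of
positive density in `ℤ/pℤ` once `p` is large.
-/

open Finset Complex

namespace AddChar

lemma normSq_sum_apply {G ι : Type*} [AddCommGroup G] [Finite G] (ψ : AddChar G ℂ)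
    (s : Finset ι) (f : ι → G) :
    (normSq (∑ i ∈ s, ψ (f i)) : ℂ) = ∑ i ∈ s, ∑ j ∈ s, ψ (f i - f j) := by
  simp_rw [← mul_conj, map_sum, sum_mul_sum, ← map_neg_eq_conj, ← map_add_eq_mul, sub_eq_add_neg]

variable {F : Type*} [Field F] [Fintype F] [DecidableEq F] {ψ : AddChar F ℂ}

lemma sum_sum_apply_mul_add_mul (hψ : ψ.IsPrimitive) (u v : F) :
    ∑ a, ∑ b, ψ (a * u + b * v) = if u = 0 ∧ v = 0 then (Fintype.card F : ℂ) ^ 2 else 0 := by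
  simp_rw [map_add_eq_mul, ← mul_sum, ← sum_mul, sum_mulShift _ hψ]
  split_ifs <;> simp_all [sq]

lemma sum_normSq_sum_apply_mul (hψ : ψ.IsPrimitive) (A : Finset F) :
    ∑ t, normSq (∑ a ∈ A, ψ (t * a)) = Fintype.card F * #A := by
  suffices h : ∑ t, (normSq (∑ a ∈ A, ψ (t * a)) : ℂ) = Fintype.card F * #A by exact_mod_cast h
  simp_rw [normSq_sum_apply, ← mul_sub]
  rw [sum_comm, sum_congr rfl fun a _ => sum_comm]
  simp_rw [sum_mulShift _ hψ, sub_eq_zero, Nat.cast_ite, Nat.cast_zero]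
  rw [sum_congr rfl fun a ha => (sum_ite_eq A a _).trans (if_pos ha), sum_const, nsmul_eq_mul,
    mul_comm]

end AddChar

section SumInvSum

variable {F : Type*} [Field F]

def sumInvSum (w : Fˣ × Fˣ) : F × F := ((w.1 : F) + w.2, (w.1 : F)⁻¹ + (w.2 : F)⁻¹)

lemma eq_or_eq_swap_or_of_sumInvSum_eq {w w' : Fˣ × Fˣ} (h : sumInvSum w = sumInvSum w') :
    w' = w ∨ w' = w.swap ∨ (w.2 = -w.1 ∧ w'.2 = -w'.1) := by
  obtain ⟨s₁, s₂⟩ := w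
  obtain ⟨s₃, s₄⟩ := w'
  simp only [sumInvSum, Prod.mk.injEq] at h
  obtain ⟨h₁, h₂⟩ := h
  simp only [Prod.ext_iff, Prod.swap, Units.ext_iff, Units.val_neg]
  by_cases hσ : (s₁ : F) + s₂ = 0
  · exact .inr <| .inr ⟨by linear_combination hσ, by linear_combination hσ - h₁⟩
  have hprod : (s₁ : F) * s₂ = s₃ * s₄ := by
    refine mul_left_cancel₀ hσ ?_
    field_simp at h₂
    linear_combination (s₁ * s₂ : F) * h₁ - h₂
  have hroots : ((s₃ : F) - s₁) * (s₃ - s₂) = 0 := by linear_combination (-s₃ : F) * h₁ + hprod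
  rcases mul_eq_zero.1 hroots with h | h
  · exact .inl ⟨by linear_combination h, by linear_combination -h₁ - h⟩
  · exact .inr <| .inl ⟨by linear_combination h, by linear_combination -h₁ - h⟩

variable [Fintype F] [DecidableEq F]

lemma card_sumInvSum_eq_le :
    #{ww : (Fˣ × Fˣ) × (Fˣ × Fˣ) | sumInvSum ww.1 = sumInvSum ww.2} ≤
      3 * (Fintype.card F - 1) ^ 2 := by
  have hsub : ({ww : (Fˣ × Fˣ) × (Fˣ × Fˣ) | sumInvSum ww.1 = sumInvSum ww.2} : Finset _) ⊆
      (univ.image fun w : Fˣ × Fˣ => (w, w)) ∪ (univ.image fun w : Fˣ × Fˣ => (w, w.swap)) ∪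
        (univ.image fun st : Fˣ × Fˣ => ((st.1, -st.1), (st.2, -st.2))) := by
    rintro ⟨w, w'⟩ hw
    simp only [mem_filter, mem_univ, true_and] at hw
    simp only [mem_union, mem_image, mem_univ, true_and, Prod.mk.injEq]
    rcases eq_or_eq_swap_or_of_sumInvSum_eq hw with h | h | ⟨h, h'⟩
    · exact .inl (.inl ⟨w, rfl, h.symm⟩)
    · exact .inl (.inr ⟨w, rfl, h.symm⟩)
    · exact .inr ⟨(w.1, w'.1), Prod.ext rfl h.symm, Prod.ext rfl h'.symm⟩
  have hcard : #(univ : Finset (Fˣ × Fˣ)) = (Fintype.card F - 1) ^ 2 := by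
    rw [card_univ, Fintype.card_prod, Fintype.card_units, sq]
  grw [card_le_card hsub, card_union_le, card_union_le, card_image_le, card_image_le,
    card_image_le, hcard]
  omega

end SumInvSum

section Kloosterman

variable {F : Type*} [Field F] [Fintype F] [DecidableEq F]

noncomputable def kloosterman (ψ : AddChar F ℂ) (a b : F) : ℂ :=
  ∑ s : Fˣ, ψ (a * s + b * (s : F)⁻¹)

lemma kloosterman_zero_zero (ψ : AddChar F ℂ) : kloosterman ψ 0 0 = Fintype.card F - 1 := by
  simp [kloosterman, Fintype.card_units, Nat.cast_sub Fintype.card_pos]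

lemma kloosterman_mul_mul_inv (ψ : AddChar F ℂ) (a b : F) (c : Fˣ) :
    kloosterman ψ (a * c) (b * (c : F)⁻¹) = kloosterman ψ a b := by
  refine Fintype.sum_equiv (Equiv.mulLeft c) _ _ fun s => congrArg ψ ?_
  simp only [Equiv.coe_mulLeft, Units.val_mul, mul_inv]
  ring

lemma kloosterman_sq (ψ : AddChar F ℂ) (a b : F) :
    kloosterman ψ a b ^ 2 = ∑ w : Fˣ × Fˣ, ψ (a * (sumInvSum w).1 + b * (sumInvSum w).2) := by
  rw [sq, kloosterman, sum_mul_sum, ← Fintype.sum_prod_type']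
  refine Fintype.sum_congr _ _ fun w => ?_
  rw [← AddChar.map_add_eq_mul, sumInvSum]
  ring_nf

lemma sum_sum_normSq_kloosterman_sq {ψ : AddChar F ℂ} (hψ : ψ.IsPrimitive) :
    ∑ a, ∑ b, normSq (kloosterman ψ a b) ^ 2 =
      Fintype.card F ^ 2 * #{ww : (Fˣ × Fˣ) × (Fˣ × Fˣ) | sumInvSum ww.1 = sumInvSum ww.2} := by
  have expand (a b : F) : (normSq (kloosterman ψ a b) ^ 2 : ℂ) =
      ∑ ww : (Fˣ × Fˣ) × (Fˣ × Fˣ), ψ (a * ((sumInvSum ww.1).1 - (sumInvSum ww.2).1) +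
        b * ((sumInvSum ww.1).2 - (sumInvSum ww.2).2)) := by
    rw [← ofReal_pow, ← map_pow, kloosterman_sq, AddChar.normSq_sum_apply,
      ← Fintype.sum_prod_type']
    ring_nf
  suffices h : ∑ a, ∑ b, (normSq (kloosterman ψ a b) ^ 2 : ℂ) =
      Fintype.card F ^ 2 * #{ww : (Fˣ × Fˣ) × (Fˣ × Fˣ) | sumInvSum ww.1 = sumInvSum ww.2} by
    exact_mod_cast h
  simp_rw [expand]
  rw [Fintype.sum_congr _ _ fun a => sum_comm, sum_comm]
  simp_rw [AddChar.sum_sum_apply_mul_add_mul hψ, sub_eq_zero, ← Prod.ext_iff]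
  rw [← sum_filter, sum_const, nsmul_eq_mul, mul_comm]

lemma norm_kloosterman_pow_four_le {ψ : AddChar F ℂ} (hψ : ψ.IsPrimitive) {a b : F}
    (hab : (a, b) ≠ 0) : ‖kloosterman ψ a b‖ ^ 4 ≤ 3 * Fintype.card F ^ 3 := by
  have hq : (2 : ℝ) ≤ Fintype.card F := by exact_mod_cast (Fintype.one_lt_card (α := F))
  have horbit : Function.Injective fun c : Fˣ => (a * c, b * (c : F)⁻¹) := by
    intro c c' h
    simp only [Prod.mk.injEq] at h
    rcases ne_or_eq a 0 with ha | rfl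
    · exact Units.ext (mul_left_cancel₀ ha h.1)
    · have hb : b ≠ 0 := by simpa using hab
      exact Units.ext (inv_injective (mul_left_cancel₀ hb h.2))
  have hcount : (#{ww : (Fˣ × Fˣ) × (Fˣ × Fˣ) | sumInvSum ww.1 = sumInvSum ww.2} : ℝ) ≤
      3 * (Fintype.card F - 1) ^ 2 := by
    rw [← Nat.cast_pred Fintype.card_pos]
    exact_mod_cast card_sumInvSum_eq_le
  have hmoment : (Fintype.card F - 1) * normSq (kloosterman ψ a b) ^ 2 ≤
      (Fintype.card F - 1) * (3 * Fintype.card F ^ 2 * (Fintype.card F - 1)) := calc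
    _ = ∑ c : Fˣ, normSq (kloosterman ψ (a * c) (b * (c : F)⁻¹)) ^ 2 := by
      simp [kloosterman_mul_mul_inv, Fintype.card_units, Nat.cast_sub Fintype.card_pos]
    _ = ∑ v ∈ univ.image fun c : Fˣ => (a * c, b * (c : F)⁻¹),
          normSq (kloosterman ψ v.1 v.2) ^ 2 := by
      rw [sum_image fun c _ c' _ h => horbit h]
    _ ≤ ∑ v : F × F, normSq (kloosterman ψ v.1 v.2) ^ 2 :=
      sum_le_univ_sum_of_nonneg fun v => by positivity
    _ = Fintype.card F ^ 2 *
          #{ww : (Fˣ × Fˣ) × (Fˣ × Fˣ) | sumInvSum ww.1 = sumInvSum ww.2} := by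
      rw [Fintype.sum_prod_type, sum_sum_normSq_kloosterman_sq hψ]
    _ ≤ Fintype.card F ^ 2 * (3 * (Fintype.card F - 1) ^ 2) := by gcongr
    _ = (Fintype.card F - 1) * (3 * Fintype.card F ^ 2 * (Fintype.card F - 1)) := by ring
  have := le_of_mul_le_mul_left hmoment (by linarith)
  rw [show (4 : ℕ) = 2 * 2 from rfl, pow_mul, Complex.sq_norm]
  nlinarith

end Kloosterman

section SubMulSub

variable {F : Type*} [Field F] [Fintype F] [DecidableEq F]

lemma sum_units_ite_eq_ite_mul_eq {x : F} (hx : x ≠ 0) (y z : F) (c : ℂ) :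
    ∑ s : Fˣ, (if (s : F) = y ∧ z = x * (s : F)⁻¹ then c else 0) =
      if y * z = x then c else 0 := by
  rcases eq_or_ne y 0 with rfl | hy
  · simp [hx.symm]
  rw [Fintype.sum_eq_single (Units.mk0 y hy) fun s hs => if_neg fun h => hs (Units.ext h.1)]
  simp only [Units.val_mk0, true_and, eq_mul_inv_iff_mul_eq₀ hy, mul_comm z]

lemma sq_card_mul_ite_mul_eq {ψ : AddChar F ℂ} (hψ : ψ.IsPrimitive) {x : F} (hx : x ≠ 0)
    (y z : F) :
    (Fintype.card F : ℂ) ^ 2 * (if y * z = x then 1 else 0) =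
      ∑ v : F × F, ψ (v.1 * y) * ψ (v.2 * z) * kloosterman ψ (-v.1) (-(v.2 * x)) := calc
  _ = ∑ s : Fˣ, if (s : F) = y ∧ z = x * (s : F)⁻¹ then (Fintype.card F : ℂ) ^ 2 else 0 := by
    rw [sum_units_ite_eq_ite_mul_eq hx, mul_ite, mul_one, mul_zero]
  _ = ∑ s : Fˣ, ∑ t, ∑ u, ψ (t * (y - s) + u * (z - x * (s : F)⁻¹)) := by
    simp_rw [AddChar.sum_sum_apply_mul_add_mul hψ, sub_eq_zero, eq_comm (a := y)]
  _ = ∑ t, ∑ u, ∑ s : Fˣ, ψ (t * (y - s) + u * (z - x * (s : F)⁻¹)) := by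
    rw [sum_comm]
    exact Fintype.sum_congr _ _ fun t => sum_comm
  _ = _ := by
    rw [Fintype.sum_prod_type]
    simp_rw [kloosterman, mul_sum, ← AddChar.map_add_eq_mul]
    refine Fintype.sum_congr _ _ fun t => Fintype.sum_congr _ _ fun u =>
      Fintype.sum_congr _ _ fun s => congrArg ψ (by ring)

lemma sq_card_mul_card_filter_sub_mul_sub_eq {ψ : AddChar F ℂ} (hψ : ψ.IsPrimitive) {x : F}
    (hx : x ≠ 0) (A B : Finset F) :
    (Fintype.card F : ℂ) ^ 2 *
        #{w ∈ (A ×ˢ A) ×ˢ (B ×ˢ B) | (w.1.1 - w.1.2) * (w.2.1 - w.2.2) = x} =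
      ∑ v : F × F, (normSq (∑ a ∈ A, ψ (v.1 * a)) : ℂ) * normSq (∑ b ∈ B, ψ (v.2 * b)) *
        kloosterman ψ (-v.1) (-(v.2 * x)) := by
  rw [card_filter, Nat.cast_sum, mul_sum]
  simp_rw [Nat.cast_ite, Nat.cast_one, Nat.cast_zero, sq_card_mul_ite_mul_eq hψ hx]
  rw [sum_comm]
  refine Fintype.sum_congr _ _ fun v => ?_
  rw [AddChar.normSq_sum_apply, AddChar.normSq_sum_apply, ← sum_product', ← sum_product',
    sum_mul_sum, ← sum_product', sum_mul]
  simp only [mul_sub]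

lemma exists_card_mul_card_le_norm_kloosterman {ψ : AddChar F ℂ} (hψ : ψ.IsPrimitive) {x : F}
    (hx : x ≠ 0) {A B : Finset F} (hA : A.Nonempty) (hB : B.Nonempty)
    (hAB : ∀ a₁ ∈ A, ∀ b₁ ∈ A, ∀ a₂ ∈ B, ∀ b₂ ∈ B, x ≠ (a₁ - b₁) * (a₂ - b₂)) :
    ∃ a b : F, (a, b) ≠ 0 ∧
      (Fintype.card F - 1) * #A * #B ≤ Fintype.card F ^ 2 * ‖kloosterman ψ a b‖ := by
  set W : F × F → ℝ := fun v => normSq (∑ a ∈ A, ψ (v.1 * a)) * normSq (∑ b ∈ B, ψ (v.2 * b))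
  set K : F × F → ℂ := fun v => kloosterman ψ (-v.1) (-(v.2 * x))
  have hW : ∀ v, 0 ≤ W v := fun v => mul_nonneg (normSq_nonneg _) (normSq_nonneg _)
  have hsumW : ∑ v, W v = Fintype.card F * #A * (Fintype.card F * #B) := by
    rw [← AddChar.sum_normSq_sum_apply_mul hψ A, ← AddChar.sum_normSq_sum_apply_mul hψ B,
      sum_mul_sum, Fintype.sum_prod_type]
  have hzero : ∑ v, (W v : ℂ) * K v = 0 := by
    have := sq_card_mul_card_filter_sub_mul_sub_eq hψ hx A B
    rw [filter_false_of_mem, card_empty, Nat.cast_zero, mul_zero] at this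
    · simpa [W, K] using this.symm
    · simp only [mem_product]
      exact fun w hw => (hAB _ hw.1.1 _ hw.1.2 _ hw.2.1 _ hw.2.2 ·.symm)
  obtain ⟨v₀, hv₀, hmax⟩ := exists_max_image (univ.erase 0) (‖K ·‖) ⟨(1, 0), by simp⟩
  refine ⟨-v₀.1, -(v₀.2 * x), ?_, ?_⟩
  · contrapose! hv₀
    simp_all [Prod.ext_iff]
  have hq : (1 : ℝ) ≤ Fintype.card F := by exact_mod_cast Fintype.card_pos
  have hW0 : W 0 = (#A * #B) ^ 2 := by simp [W]; ring
  have hK0 : K 0 = ((Fintype.card F - 1 : ℝ) : ℂ) := by simp [K, kloosterman_zero_zero]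
  have hrest : ∑ v ∈ univ.erase 0, (W v : ℂ) * K v = -((W 0 : ℂ) * K 0) := by
    rw [← add_sum_erase _ _ (mem_univ 0)] at hzero
    linear_combination hzero
  have hmain : (Fintype.card F - 1) * (#A * #B) ^ 2 ≤
      ‖K v₀‖ * (Fintype.card F * #A * (Fintype.card F * #B)) := calc
    _ = ‖∑ v ∈ univ.erase 0, (W v : ℂ) * K v‖ := by
      rw [hrest, norm_neg, hW0, hK0, ← ofReal_mul, norm_real, Real.norm_of_nonneg (by positivity)]
      ring
    _ ≤ ∑ v ∈ univ.erase 0, W v * ‖K v₀‖ := by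
      refine (norm_sum_le _ _).trans (sum_le_sum fun v hv => ?_)
      rw [norm_mul, norm_real, Real.norm_of_nonneg (hW v)]
      exact mul_le_mul_of_nonneg_left (hmax v hv) (hW v)
    _ ≤ ∑ v, W v * ‖K v₀‖ :=
      sum_le_univ_sum_of_nonneg fun v => mul_nonneg (hW v) (norm_nonneg _)
    _ = ‖K v₀‖ * (Fintype.card F * #A * (Fintype.card F * #B)) := by
      rw [← sum_mul, hsumW, mul_comm]
  have hAB : (0 : ℝ) < #A * #B := by positivity
  nlinarith

theorem exists_eq_sub_mul_sub_of_pow_lt {A B : Finset F}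
    (hAB : 3 * (Fintype.card F : ℝ) ^ 11 < ((Fintype.card F - 1) * #A * #B) ^ 4) (x : F) :
    ∃ a₁ ∈ A, ∃ b₁ ∈ A, ∃ a₂ ∈ B, ∃ b₂ ∈ B, x = (a₁ - b₁) * (a₂ - b₂) := by
  have hq : (1 : ℝ) ≤ Fintype.card F := by exact_mod_cast Fintype.card_pos
  obtain ⟨a, ha⟩ : A.Nonempty :=
    nonempty_iff_ne_empty.2 fun h => by simp [h] at hAB; exact hAB.not_ge (by positivity)
  obtain ⟨b, hb⟩ : B.Nonempty :=
    nonempty_iff_ne_empty.2 fun h => by simp [h] at hAB; exact hAB.not_ge (by positivity)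
  rcases eq_or_ne x 0 with rfl | hx
  · exact ⟨a, ha, a, ha, b, hb, b, hb, by simp⟩
  by_contra! hno
  obtain ⟨ψ, hψ⟩ := AddChar.exists_apply_ne_zero.2 (one_ne_zero (α := F))
  have hprim : ψ.IsPrimitive := .of_ne_one fun h => hψ (by simp [h])
  obtain ⟨a, b, hab, hle⟩ := exists_card_mul_card_le_norm_kloosterman hprim hx ⟨a, ha⟩ ⟨b, hb⟩ hno
  refine hAB.not_ge ?_
  calc ((Fintype.card F - 1) * #A * #B : ℝ) ^ 4
      ≤ (Fintype.card F ^ 2 * ‖kloosterman ψ a b‖) ^ 4 := by gcongr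
    _ = Fintype.card F ^ 8 * ‖kloosterman ψ a b‖ ^ 4 := by ring
    _ ≤ Fintype.card F ^ 8 * (3 * Fintype.card F ^ 3) := by
      gcongr
      exact norm_kloosterman_pow_four_le hprim hab
    _ = 3 * Fintype.card F ^ 11 := by ring

end SubMulSub

/-- For dense subsets `E₁, E₂` of `ℤ/pℤ` with `p` a large prime,
`(E₁ - E₁)·(E₂ - E₂) = ℤ/pℤ`. -/
theorem diff_product_eq_univ_prime (α β : ℝ) (hα : 0 < α) (hβ : 0 < β) :
    ∃ p₀ : ℕ, ∀ p : ℕ, p.Prime → p₀ ≤ p →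
      ∀ E₁ E₂ : Finset (ZMod p),
        α * p ≤ E₁.card → β * p ≤ E₂.card →
        ∀ x : ZMod p,
          ∃ a₁ ∈ E₁, ∃ b₁ ∈ E₁, ∃ a₂ ∈ E₂, ∃ b₂ ∈ E₂,
            x = (a₁ - b₁) * (a₂ - b₂) := by
  refine ⟨⌈48 / (α * β) ^ 4⌉₊ + 1, fun p hp hp₀ E₁ E₂ hE₁ hE₂ x => ?_⟩
  have : Fact p.Prime := ⟨hp⟩
  have hp2 : (2 : ℝ) ≤ p := by exact_mod_cast hp.two_le
  have hlarge : 48 < (α * β) ^ 4 * p := by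
    rw [← div_lt_iff₀' (by positivity)]
    exact (Nat.le_ceil _).trans_lt (by exact_mod_cast hp₀)
  refine exists_eq_sub_mul_sub_of_pow_lt ?_ x
  rw [ZMod.card]
  calc 3 * (p : ℝ) ^ 11 = p ^ 8 * (48 * p ^ 3 / 16) := by ring
    _ < p ^ 8 * ((α * β) ^ 4 * p * p ^ 3 / 16) := by gcongr
    _ = p ^ 8 * (α * β * (p / 2)) ^ 4 := by ring
    _ ≤ p ^ 8 * (α * β * (p - 1)) ^ 4 := by gcongr; linarith
    _ = ((p - 1) * (α * p) * (β * p)) ^ 4 := by ring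
    _ ≤ ((p - 1) * E₁.card * E₂.card) ^ 4 := by
      have : (0 : ℝ) ≤ p - 1 := by linarith
      gcongr
end

section
/- Let G be a finite abelian group of order N with the uniform probability measure, and let E ⊆ G with |E| ≥ αN for some α > 0. Then for every g ∈ G and every L ≥ 1 there exists m with 1 ≤ m ≤ ⌊1/α^L⌋ + 1 such that for each 1 ≤ i ≤ L, the sets E and E + i·m·g intersect. -/
/-- Finitary multiple recurrence in a finite abelian group: if `|E| ≥ α|G|`,
then for every `g ∈ G` and `L ≥ 1` there is `1 ≤ m ≤ ⌊1/α^L⌋ + 1` such that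
`E` meets `E + i·m·g` for each `1 ≤ i ≤ L`. -/
theorem finitary_multiple_recurrence
    {G : Type*} [AddCommGroup G] [Fintype G] [DecidableEq G]
    (α : ℝ) (hα : 0 < α) (E : Finset G)
    (hE : α * (Fintype.card G : ℝ) ≤ E.card)
    (g : G) (L : ℕ) (hL : 1 ≤ L) :
    ∃ m : ℕ, 1 ≤ m ∧ m ≤ Nat.floor (1 / α ^ L) + 1 ∧
      ∀ i : ℕ, 1 ≤ i → i ≤ L →
        ∃ x ∈ E, ∃ y ∈ E, x = y + (i * m) • g := by
  set N := Fintype.card G with hN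
  have hNpos : 0 < N := Fintype.card_pos
  set M := Nat.floor (1 / α ^ L) + 1 with hM
  -- E is nonempty
  have hEcard : 0 < E.card := by
    have h0 : (0:ℝ) < (E.card : ℝ) := lt_of_lt_of_le (by positivity) hE
    exact_mod_cast h0
  clear_value N M
  -- key counting inequality
  have hαL : (1 : ℝ) / α ^ L < M := by
    have := Nat.lt_floor_add_one (1 / α ^ L)
    push_cast [hM]
    push_cast at this
    linarith
  have hcount : (N : ℝ) ^ L < (M + 1) * (E.card : ℝ) ^ L := by
    have hαpow : (0:ℝ) < α ^ L := by positivity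
    have h1 : (N : ℝ) ^ L < M * (α ^ L * (N:ℝ) ^ L) := by
      have hNL : (0:ℝ) < (N:ℝ) ^ L := by positivity
      rw [div_lt_iff₀ hαpow] at hαL
      nlinarith
    have h2 : α ^ L * (N:ℝ) ^ L ≤ (E.card : ℝ) ^ L := by
      rw [← mul_pow]
      exact pow_le_pow_left₀ (by positivity) hE L
    have hM0 : (0:ℝ) ≤ (M:ℝ) := by positivity
    have hEL : (0:ℝ) < (E.card : ℝ) ^ L := by positivity
    nlinarith
  -- pigeonhole setup
  classical
  set S : Finset (ℕ × (Fin L → G)) :=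
    Finset.range (M + 1) ×ˢ Fintype.piFinset (fun _ : Fin L => E) with hS
  have hScard : S.card = (M + 1) * E.card ^ L := by
    simp [hS, Finset.card_product, Fintype.card_piFinset]
  have hcardlt : Fintype.card (Fin L → G) < S.card := by
    have hc : Fintype.card (Fin L → G) = N ^ L := by
      rw [Fintype.card_fun, Fintype.card_fin, hN]
    rw [hc, hScard]
    have h' : ((N:ℝ)) ^ L < (((M+1) : ℕ):ℝ) * (((E.card ^ L) : ℕ):ℝ) := by
      push_cast; exact hcount
    exact_mod_cast h'
  have hmaps : ∀ p ∈ S, (fun p : ℕ × (Fin L → G) =>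
      (fun j : Fin L => p.2 j + (p.1 * (j.1 + 1)) • g)) p ∈ (Finset.univ : Finset (Fin L → G)) :=
    fun _ _ => Finset.mem_univ _
  obtain ⟨p, hp, q, hq, hpq, heq⟩ :=
    Finset.exists_ne_map_eq_of_card_lt_of_maps_to (by simpa using hcardlt) hmaps
  obtain ⟨t₁, a⟩ := p
  obtain ⟨t₂, b⟩ := q
  simp only [hS, Finset.mem_product, Finset.mem_range, Fintype.mem_piFinset] at hp hq
  have heq' : ∀ j : Fin L, a j + (t₁ * (j.1 + 1)) • g = b j + (t₂ * (j.1 + 1)) • g :=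
    fun j => congrFun heq j
  have hne : t₁ ≠ t₂ := by
    rintro rfl
    apply hpq
    have : a = b := funext fun j => by have := heq' j; exact add_right_cancel this
    rw [this]
  -- wlog t₁ < t₂ gives witnesses with x = y + ... ; handle both orders
  have key : ∀ (s t : ℕ) (u v : Fin L → G), s < t → t < M + 1 →
      (∀ j, u j ∈ E) → (∀ j, v j ∈ E) →
      (∀ j : Fin L, u j + (s * (j.1 + 1)) • g = v j + (t * (j.1 + 1)) • g) →
      ∃ m : ℕ, 1 ≤ m ∧ m ≤ M ∧ ∀ i : ℕ, 1 ≤ i → i ≤ L →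
        ∃ x ∈ E, ∃ y ∈ E, x = y + (i * m) • g := by
    intro s t u v hst htM hu hv hequv
    refine ⟨t - s, by omega, by omega, ?_⟩
    intro i hi1 hiL
    have hj : i - 1 < L := by omega
    refine ⟨u ⟨i - 1, hj⟩, hu _, v ⟨i - 1, hj⟩, hv _, ?_⟩
    have h := hequv ⟨i - 1, hj⟩
    simp only at h
    have hi' : i - 1 + 1 = i := by omega
    rw [hi'] at h
    have ht : t * i = (t - s) * i + s * i := by
      rw [Nat.sub_mul, Nat.sub_add_cancel (Nat.mul_le_mul_right i hst.le)]
    rw [ht, add_smul, ← add_assoc] at h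
    have h3 := add_right_cancel h
    rw [mul_comm]
    exact h3
  rcases lt_or_gt_of_ne hne with h | h
  · exact key t₁ t₂ a b h hq.1 hp.2 hq.2 heq'
  · exact key t₂ t₁ b a h hp.1 hq.2 hp.2 (fun j => (heq' j).symm)
end

section
/- Let E ⊆ ℤ with d*(E) > 0, where d* is upper Banach density. Then there exists an invertible measure-preserving system (X, μ, T) on a probability space and a measurable set A ⊆ X with μ(A) = d*(E), such that for all n ∈ ℤ, d*(E ∩ (E + n)) ≥ μ(A ∩ T^n A); in particular the return-time set R(A) = {n : μ(A ∩ T^n A) > 0} is contained in E − E. -/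
open MeasureTheory

/-!
Choose windows `[aₖ, aₖ + Nₖ)` with `Nₖ → ∞` on which the density of `E` tends to `d*(E)`, and
follow the orbit of the indicator sequence `1_E : ℤ → Bool` under the left shift `T`. On each
window, the proportion of times the orbit visits a set `S` is a finitely additive probability on
all subsets; its limit along a free ultrafilter on `ℕ` is still finitely additive, and it is
`T`-invariant because shifting a window of length `Nₖ` by one changes each count by at most one.
On compact sets it is therefore a content, whose measure `μ` agrees with it on clopen sets. For
the cylinder `A = {x | x 0 = true}`, the orbit visits `A` at the times in `E` and `A ∩ TⁿA` at the
times in `E ∩ (E + n)`, so `μ A = d*(E)` and `μ (A ∩ TⁿA)` is a limit of window densities of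
`E ∩ (E + n)` along windows of growing length, hence at most `d*(E ∩ (E + n))`.
-/

open Filter Topology Set

noncomputable def windowDensity (E : Set ℤ) (N : ℕ) (a : ℤ) : ℝ :=
  ((E ∩ Ico a (a + N)).ncard : ℝ) / N

lemma upperBanachDensity_eq_limsup (E : Set ℤ) :
    upperBanachDensity E = limsup (fun N : ℕ => ⨆ a, windowDensity E N a) atTop :=
  rfl

lemma windowDensity_nonneg (E : Set ℤ) (N : ℕ) (a : ℤ) : 0 ≤ windowDensity E N a := by
  unfold windowDensity; positivity

lemma windowDensity_le_one (E : Set ℤ) (N : ℕ) (a : ℤ) : windowDensity E N a ≤ 1 := by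
  refine div_le_one_of_le₀ ?_ (Nat.cast_nonneg _)
  have hcard : (Ico a (a + N)).ncard = N := by
    rw [← Finset.coe_Ico, ncard_coe_finset, Int.card_Ico]; simp
  exact_mod_cast hcard ▸ ncard_le_ncard inter_subset_right (finite_Ico a (a + N))

lemma bddAbove_range_windowDensity (E : Set ℤ) (N : ℕ) : BddAbove (range (windowDensity E N)) :=
  ⟨1, forall_mem_range.2 (windowDensity_le_one E N)⟩

lemma eventually_windowDensity_lt {ι : Type*} {l : Filter ι} (E : Set ℤ) {N : ι → ℕ}
    (hN : Tendsto N l atTop) (a : ι → ℤ) {b : ℝ} (hb : upperBanachDensity E < b) :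
    ∀ᶠ i in l, windowDensity E (N i) (a i) < b := by
  have hbdd : IsBoundedUnder (· ≤ ·) atTop fun n : ℕ => ⨆ a, windowDensity E n a :=
    isBoundedUnder_of ⟨1, fun n => ciSup_le (windowDensity_le_one E n)⟩
  rw [upperBanachDensity_eq_limsup] at hb
  filter_upwards [hN.eventually (eventually_lt_of_limsup_lt hb hbdd)] with i hi
  exact (le_ciSup (bddAbove_range_windowDensity E (N i)) (a i)).trans_lt hi

lemma le_upperBanachDensity_of_tendsto {ι : Type*} {l : Filter ι} [l.NeBot] (E : Set ℤ)
    {N : ι → ℕ} (hN : Tendsto N l atTop) {a : ι → ℤ} {d : ℝ}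
    (hd : Tendsto (fun i => windowDensity E (N i) (a i)) l (𝓝 d)) :
    d ≤ upperBanachDensity E :=
  le_of_forall_gt_imp_ge_of_dense fun _ hb =>
    le_of_tendsto hd ((eventually_windowDensity_lt E hN a hb).mono fun _ => le_of_lt)

lemma exists_tendsto_windowDensity (E : Set ℤ) :
    ∃ (N : ℕ → ℕ) (a : ℕ → ℤ), Tendsto N atTop atTop ∧
      Tendsto (fun k => windowDensity E (N k) (a k)) atTop (𝓝 (upperBanachDensity E)) := by
  have hbdd : IsBoundedUnder (· ≥ ·) atTop fun n : ℕ => ⨆ a, windowDensity E n a :=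
    isBoundedUnder_of ⟨0, fun n => (windowDensity_nonneg E n 0).trans
      (le_ciSup (bddAbove_range_windowDensity E n) 0)⟩
  have hwindow (k : ℕ) :
      ∃ N ≥ k, ∃ a, upperBanachDensity E - 1 / (k + 1) < windowDensity E N a := by
    have hlt := sub_lt_self (upperBanachDensity E) (Nat.one_div_pos_of_nat (n := k))
    rw [upperBanachDensity_eq_limsup] at hlt ⊢
    obtain ⟨N, hN, hN_lt⟩ :=
      frequently_atTop.1 (frequently_lt_of_lt_limsup hbdd.isCoboundedUnder_le hlt) k
    exact ⟨N, hN, exists_lt_of_lt_ciSup hN_lt⟩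
  choose N hN a ha using hwindow
  have hNtop : Tendsto N atTop atTop := tendsto_atTop_mono hN tendsto_id
  refine ⟨N, a, hNtop, tendsto_order.2
    ⟨fun b hb => ?_, fun b hb => eventually_windowDensity_lt E hNtop a hb⟩⟩
  filter_upwards [tendsto_one_div_add_atTop_nhds_zero_nat.eventually (gt_mem_nhds (sub_pos.2 hb))]
    with k hk
  linarith [ha k]

lemma upperBanachDensity_empty : upperBanachDensity ∅ = 0 := by
  simp [upperBanachDensity]

lemma nonempty_of_upperBanachDensity_pos {E : Set ℤ} (h : 0 < upperBanachDensity E) :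
    E.Nonempty :=
  nonempty_iff_ne_empty.2 fun hE => h.ne' (hE ▸ upperBanachDensity_empty)

lemma sum_range_indicator_eq_ncard (E : Set ℤ) (a : ℤ) (N : ℕ) :
    ∑ k ∈ Finset.range N, E.indicator (1 : ℤ → ℝ) (a + k) =
      (E ∩ Ico a (a + N)).ncard := by
  classical
  have himage : (fun k : ℕ => a + k) '' ↑({k ∈ Finset.range N | a + k ∈ E} : Finset ℕ) =
      E ∩ Ico a (a + N) := by
    ext j
    simp only [Finset.coe_filter, Finset.mem_range, mem_image, mem_inter_iff, mem_Ico]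
    constructor
    · rintro ⟨k, ⟨hk, hE⟩, rfl⟩
      exact ⟨hE, by omega, by omega⟩
    · rintro ⟨hE, h1, h2⟩
      refine ⟨(j - a).toNat, ⟨by omega, ?_⟩, by omega⟩
      rwa [Int.toNat_of_nonneg (by omega), add_sub_cancel]
  rw [← himage, ncard_image_of_injective _ fun i j h => by simpa using h, ncard_coe_finset]
  simp [indicator_apply, Finset.sum_boole]

section VisitFrequency

variable {X : Type*} (f : X → X)

lemma indicator_one_mem_Icc (S : Set X) (x : X) : S.indicator (1 : X → ℝ) x ∈ Icc 0 1 := by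
  by_cases hx : x ∈ S <;> simp [hx]

noncomputable def visitFreq (S : Set X) (n : ℕ) (x : X) : ℝ :=
  birkhoffAverage ℝ f (S.indicator 1) n x

lemma visitFreq_mono {S S' : Set X} (h : S ⊆ S') (n : ℕ) (x : X) :
    visitFreq f S n x ≤ visitFreq f S' n x := by
  unfold visitFreq birkhoffAverage birkhoffSum
  gcongr
  exact zero_le_one

lemma visitFreq_univ {n : ℕ} (hn : n ≠ 0) (x : X) : visitFreq f univ n x = 1 := by
  rw [visitFreq, indicator_univ, birkhoffAverage_of_comp_eq ℝ rfl (Nat.cast_ne_zero.2 hn)]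
  rfl

lemma visitFreq_mem_Icc (S : Set X) (n : ℕ) (x : X) : visitFreq f S n x ∈ Icc (0 : ℝ) 1 := by
  rcases eq_or_ne n 0 with rfl | hn
  · simp [visitFreq]
  refine ⟨?_, visitFreq_univ f hn x ▸ visitFreq_mono f (subset_univ S) n x⟩
  unfold visitFreq birkhoffAverage birkhoffSum
  exact smul_nonneg (by positivity) (Finset.sum_nonneg fun _ _ =>
    indicator_nonneg (fun _ _ => zero_le_one' ℝ) _)

lemma visitFreq_union {S S' : Set X} (h : Disjoint S S') (n : ℕ) (x : X) :
    visitFreq f (S ∪ S') n x = visitFreq f S n x + visitFreq f S' n x := by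
  simp only [visitFreq, birkhoffAverage, birkhoffSum, indicator_union_of_disjoint h,
    Finset.sum_add_distrib, smul_add]

lemma visitFreq_preimage (S : Set X) (n : ℕ) (x : X) :
    visitFreq f (f ⁻¹' S) n x = visitFreq f S n (f x) := by
  simp only [visitFreq, birkhoffAverage, birkhoffSum, ← Function.iterate_succ_apply,
    Function.iterate_succ_apply']
  rfl

lemma dist_visitFreq_apply_le (S : Set X) (n : ℕ) (x : X) :
    dist (visitFreq f S n (f x)) (visitFreq f S n x) ≤ 1 / n := by
  rw [visitFreq, visitFreq, dist_birkhoffAverage_apply_birkhoffAverage]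
  gcongr
  exact Real.dist_le_of_mem_Icc_01 (indicator_one_mem_Icc S _) (indicator_one_mem_Icc S _)

end VisitFrequency

section OrbitMean

variable {X : Type*} (f : X → X) (U : Ultrafilter ℕ) (y : ℕ → X) (N : ℕ → ℕ)

noncomputable def orbitMean (S : Set X) : ℝ :=
  limUnder (U : Filter ℕ) fun k => visitFreq f S (N k) (y k)

lemma tendsto_orbitMean (S : Set X) :
    Tendsto (fun k => visitFreq f S (N k) (y k)) U (𝓝 (orbitMean f U y N S)) := by
  obtain ⟨c, -, hc⟩ := isCompact_Icc.ultrafilter_le_nhds (U.map _) <| le_principal_iff.2 <|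
    Ultrafilter.mem_map.2 <| univ_mem' fun k => visitFreq_mem_Icc f S (N k) (y k)
  exact tendsto_nhds_limUnder ⟨c, hc⟩

lemma orbitMean_nonneg (S : Set X) : 0 ≤ orbitMean f U y N S :=
  ge_of_tendsto' (tendsto_orbitMean f U y N S) fun k => (visitFreq_mem_Icc f S (N k) (y k)).1

lemma orbitMean_mono : Monotone (orbitMean f U y N) := fun _ _ h =>
  le_of_tendsto_of_tendsto' (tendsto_orbitMean f U y N _) (tendsto_orbitMean f U y N _) fun k =>
    visitFreq_mono f h (N k) (y k)

lemma orbitMean_union {S S' : Set X} (h : Disjoint S S') :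
    orbitMean f U y N (S ∪ S') = orbitMean f U y N S + orbitMean f U y N S' := by
  refine tendsto_nhds_unique (tendsto_orbitMean f U y N _) ?_
  simpa only [visitFreq_union f h] using
    (tendsto_orbitMean f U y N S).add (tendsto_orbitMean f U y N S')

lemma orbitMean_univ (hN : ∀ᶠ k in U, N k ≠ 0) : orbitMean f U y N univ = 1 :=
  tendsto_nhds_unique (tendsto_orbitMean f U y N _) <| tendsto_const_nhds.congr' <|
    hN.mono fun k hk => (visitFreq_univ f hk (y k)).symm

lemma orbitMean_preimage (hN : Tendsto N U atTop) (S : Set X) :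
    orbitMean f U y N (f ⁻¹' S) = orbitMean f U y N S := by
  have hshift : Tendsto (fun k => visitFreq f S (N k) (f (y k)) - visitFreq f S (N k) (y k)) U
      (𝓝 0) :=
    squeeze_zero_norm (fun k => (dist_eq_norm _ _).symm.trans_le (dist_visitFreq_apply_le f S _ _))
      ((tendsto_const_div_atTop_nhds_zero_nat 1).comp hN)
  refine tendsto_nhds_unique (tendsto_orbitMean f U y N _) ?_
  simpa only [visitFreq_preimage, sub_add_cancel, zero_add] using
    hshift.add (tendsto_orbitMean f U y N S)

end OrbitMean

namespace MeasureTheory.Content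

open TopologicalSpace NNReal

variable {G : Type*} [TopologicalSpace G]

def ofAdditive (ν : Set G → ℝ≥0) (mono : Monotone ν)
    (add : ∀ s t, Disjoint s t → ν (s ∪ t) = ν s + ν t) : Content G where
  toFun K := ν K
  mono' _ _ h := mono h
  sup_disjoint' K L h _ _ := add K L h
  sup_le' K L :=
    calc ν (K ∪ L) = ν (K ∪ (L \ K)) := by rw [union_sdiff_self]
      _ = ν K + ν (L \ K) := add _ _ disjoint_sdiff_right
      _ ≤ ν K + ν L := add_le_add_right (mono sdiff_subset) _

variable [R1Space G] [MeasurableSpace G] [BorelSpace G] (μ : Content G)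

lemma measure_apply_of_isCompact_of_isOpen {S : Set G} (hc : IsCompact S) (ho : IsOpen S) :
    μ.measure S = μ ⟨S, hc⟩ := by
  rw [μ.measure_apply ho.measurableSet, μ.outerMeasure_of_isOpen S ho,
    μ.innerContent_of_isCompact hc ho]

lemma measurePreserving_measure (f : G ≃ₜ G)
    (h : ∀ ⦃K : Compacts G⦄, μ (K.map f f.continuous) = μ K) :
    MeasurePreserving f μ.measure μ.measure := by
  refine ⟨f.continuous.measurable, Measure.ext fun s hs => ?_⟩
  rw [Measure.map_apply f.continuous.measurable hs, μ.measure_apply (f.continuous.measurable hs),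
    μ.measure_apply hs, μ.outerMeasure_preimage f h]

end MeasureTheory.Content

section OrbitMeasure

open TopologicalSpace

variable {X : Type*} [TopologicalSpace X] (f : X → X) (U : Ultrafilter ℕ) (y : ℕ → X)
  (N : ℕ → ℕ)

noncomputable def orbitContent : Content X :=
  .ofAdditive (fun S => (orbitMean f U y N S).toNNReal)
    (fun _ _ h => Real.toNNReal_le_toNNReal (orbitMean_mono f U y N h))
    (fun S S' h => by
      rw [orbitMean_union f U y N h,
        Real.toNNReal_add (orbitMean_nonneg f U y N S) (orbitMean_nonneg f U y N S')])

variable [R1Space X] [MeasurableSpace X] [BorelSpace X]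

lemma orbitContent_measure_apply {S : Set X} (hc : IsCompact S) (ho : IsOpen S) :
    (orbitContent f U y N).measure S = ENNReal.ofReal (orbitMean f U y N S) :=
  (orbitContent f U y N).measure_apply_of_isCompact_of_isOpen hc ho

lemma isProbabilityMeasure_orbitContent [CompactSpace X] (hN : ∀ᶠ k in U, N k ≠ 0) :
    IsProbabilityMeasure (orbitContent f U y N).measure :=
  ⟨by rw [orbitContent_measure_apply f U y N isCompact_univ isOpen_univ,
    orbitMean_univ f U y N hN, ENNReal.ofReal_one]⟩

lemma measurePreserving_orbitContent (T : X ≃ₜ X) (hN : Tendsto N U atTop) :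
    MeasurePreserving T (orbitContent T U y N).measure (orbitContent T U y N).measure := by
  refine (orbitContent T U y N).measurePreserving_measure T fun K => ?_
  have h := orbitMean_preimage T U y N hN (T '' K)
  rw [T.preimage_image] at h
  simp only [orbitContent, Content.ofAdditive, Content.mk_apply, Compacts.coe_map, h]

end OrbitMeasure

namespace Equiv.Perm

variable {X : Type*} (T : Perm X)

lemma image_zpow (n : ℤ) (A : Set X) : ⇑(T ^ n) '' A = ⇑(T ^ (-n)) ⁻¹' A := by
  rw [Equiv.image_eq_preimage_symm, zpow_neg, inv_def]

lemma iterate_zpow_apply (k : ℕ) (a : ℤ) (x : X) :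
    (⇑T)^[k] ((T ^ a) x) = (T ^ (a + k)) x := by
  rw [iterate_eq_pow, ← mul_apply, ← zpow_natCast, ← zpow_add, add_comm]

variable {T} {x : X} {A : Set X} {E : Set ℤ}

lemma zpow_apply_mem_inter_image_iff (hA : ∀ m : ℤ, (T ^ m) x ∈ A ↔ m ∈ E) (n m : ℤ) :
    (T ^ m) x ∈ A ∩ ⇑(T ^ n) '' A ↔ m ∈ E ∩ (· + n) '' E := by
  rw [image_zpow, mem_inter_iff, mem_preimage, ← mul_apply, ← zpow_add, hA, hA,
    image_add_right, mem_inter_iff, mem_preimage, add_comm (-n)]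

lemma visitFreq_zpow_apply (hA : ∀ m : ℤ, (T ^ m) x ∈ A ↔ m ∈ E) (N : ℕ) (a : ℤ) :
    visitFreq T A N ((T ^ a) x) = windowDensity E N a := by
  rw [visitFreq, birkhoffAverage, birkhoffSum, windowDensity, ← sum_range_indicator_eq_ncard,
    smul_eq_mul, inv_mul_eq_div]
  congr 1
  refine Finset.sum_congr rfl fun k _ => ?_
  rw [iterate_zpow_apply]
  by_cases h : a + k ∈ E
  · rw [indicator_of_mem h, indicator_of_mem ((hA _).2 h)]; rfl
  · rw [indicator_of_notMem h, indicator_of_notMem (mt (hA _).1 h)]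

end Equiv.Perm

section IntShift

variable (α : Type*) [TopologicalSpace α]

def intShift : (ℤ → α) ≃ₜ (ℤ → α) where
  toFun x n := x (n + 1)
  invFun x n := x (n - 1)
  left_inv x := by funext n; simp
  right_inv x := by funext n; simp
  continuous_toFun := by fun_prop
  continuous_invFun := by fun_prop

lemma intShift_zpow_apply (m : ℤ) (x : ℤ → α) (n : ℤ) :
    ((intShift α).toEquiv ^ m) x n = x (n + m) := by
  induction m using Int.induction_on generalizing x n with
  | zero => simp
  | succ k ih =>
    rw [zpow_add_one, Equiv.Perm.mul_apply, ih, ← add_assoc]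
    rfl
  | pred k ih =>
    rw [zpow_sub_one, Equiv.Perm.mul_apply, ih, add_sub_assoc']
    rfl

lemma zpow_intShift_boolIndicator_apply_zero (E : Set ℤ) (m : ℤ) :
    ((intShift Bool).toEquiv ^ m) E.boolIndicator 0 = true ↔ m ∈ E := by
  rw [intShift_zpow_apply, zero_add, ← mem_iff_boolIndicator]

lemma continuous_intShift_zpow (m : ℤ) : Continuous ⇑((intShift α).toEquiv ^ m) :=
  continuous_pi fun n => by simp only [intShift_zpow_apply]; exact continuous_apply _

end IntShift

lemma tendsto_windowDensity_orbitContent_measure {X : Type*} [TopologicalSpace X] [R1Space X]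
    [MeasurableSpace X] [BorelSpace X] (T : X ≃ₜ X) (x : X) (U : Ultrafilter ℕ)
    (a : ℕ → ℤ) (N : ℕ → ℕ) {S : Set X} {F : Set ℤ} (hc : IsCompact S) (ho : IsOpen S)
    (hSF : ∀ m : ℤ, (T.toEquiv ^ m) x ∈ S ↔ m ∈ F) :
    Tendsto (fun k => windowDensity F (N k) (a k)) U
      (𝓝 ((orbitContent T U (fun k => (T.toEquiv ^ a k) x) N).measure S).toReal) := by
  rw [orbitContent_measure_apply _ _ _ _ hc ho, ENNReal.toReal_ofReal (orbitMean_nonneg _ _ _ _ _)]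
  exact (tendsto_orbitMean _ U _ N S).congr fun k => Equiv.Perm.visitFreq_zpow_apply hSF _ _

theorem furstenberg_correspondence_general (E : Set ℤ) :
    ∃ (X : Type) (_ : MeasurableSpace X) (μ : Measure X)
      (_ : IsProbabilityMeasure μ) (T : Equiv.Perm X),
      Measurable T ∧ Measurable T.symm ∧ MeasurePreserving T μ μ ∧
      ∃ A : Set X, MeasurableSet A ∧ (μ A).toReal = upperBanachDensity E ∧
        (∀ n : ℤ,
          (μ (A ∩ ⇑(T ^ n) '' A)).toReal ≤
            upperBanachDensity (E ∩ (fun x => x + n) '' E)) ∧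
        ∀ n : ℤ, 0 < μ (A ∩ ⇑(T ^ n) '' A) →
          ∃ x ∈ E, ∃ y ∈ E, n = x - y := by
  obtain ⟨N, a, hN, hdensity⟩ := exists_tendsto_windowDensity E
  let U := Ultrafilter.of (atTop : Filter ℕ)
  have hNU : Tendsto N U atTop := hN.mono_left (Ultrafilter.of_le _)
  let T := intShift Bool
  let μ := (orbitContent T U (fun k => (T.toEquiv ^ a k) E.boolIndicator) N).measure
  let A : Set (ℤ → Bool) := {z | z 0 = true}
  have hA (m : ℤ) : (T.toEquiv ^ m) E.boolIndicator ∈ A ↔ m ∈ E :=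
    zpow_intShift_boolIndicator_apply_zero E m
  have hA_clopen : IsClopen A := (isClopen_discrete {true}).preimage (continuous_apply 0)
  have hμ {S : Set (ℤ → Bool)} {F : Set ℤ} (hS : IsClopen S)
      (hSF : ∀ m : ℤ, (T.toEquiv ^ m) E.boolIndicator ∈ S ↔ m ∈ F) :
      Tendsto (fun k => windowDensity F (N k) (a k)) U (𝓝 (μ S).toReal) :=
    tendsto_windowDensity_orbitContent_measure T _ U a N hS.isClosed.isCompact hS.isOpen hSF
  have hμAn (n : ℤ) : (μ (A ∩ ⇑(T.toEquiv ^ n) '' A)).toReal ≤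
      upperBanachDensity (E ∩ (fun x => x + n) '' E) := by
    refine le_upperBanachDensity_of_tendsto _ hNU
      (hμ ?_ (Equiv.Perm.zpow_apply_mem_inter_image_iff hA n))
    rw [Equiv.Perm.image_zpow]
    exact hA_clopen.inter (hA_clopen.preimage (continuous_intShift_zpow Bool (-n)))
  refine ⟨ℤ → Bool, inferInstance, μ,
    isProbabilityMeasure_orbitContent _ U _ N (hNU.eventually_ne_atTop 0), T.toEquiv,
    T.continuous.measurable, T.symm.continuous.measurable,
    measurePreserving_orbitContent U _ N T hNU,
    A, hA_clopen.isOpen.measurableSet,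
    tendsto_nhds_unique (hμ hA_clopen hA) (hdensity.mono_left (Ultrafilter.of_le _)), hμAn,
    fun n hpos => ?_⟩
  obtain ⟨_, ⟨hxE, y, hyE, rfl⟩⟩ := nonempty_of_upperBanachDensity_pos
    ((ENNReal.toReal_pos hpos.ne' (measure_ne_top _ _)).trans_le (hμAn n))
  exact ⟨_, hxE, y, hyE, by ring⟩

/-- Furstenberg's correspondence principle: for `E ⊆ ℤ` of positive upper Banach
density there are an invertible probability measure-preserving system `(X, μ, T)`
and `A ⊆ X` with `μ(A) = d*(E)` and `d*(E ∩ (E + n)) ≥ μ(A ∩ TⁿA)` for all `n`;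
in particular `R(A) ⊆ E - E`. -/
theorem furstenberg_correspondence (E : Set ℤ) (hE : 0 < upperBanachDensity E) :
    ∃ (X : Type) (_ : MeasurableSpace X) (μ : Measure X)
      (_ : IsProbabilityMeasure μ) (T : Equiv.Perm X),
      Measurable T ∧ Measurable T.symm ∧ MeasurePreserving T μ μ ∧
      ∃ A : Set X, MeasurableSet A ∧ (μ A).toReal = upperBanachDensity E ∧
        (∀ n : ℤ,
          (μ (A ∩ ⇑(T ^ n) '' A)).toReal ≤
            upperBanachDensity (E ∩ (fun x => x + n) '' E)) ∧
        ∀ n : ℤ, 0 < μ (A ∩ ⇑(T ^ n) '' A) →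
          ∃ x ∈ E, ∃ y ∈ E, n = x - y :=
  furstenberg_correspondence_general E
end

section
/- Let α > 0 and let E ⊆ ℤ with upper Banach density d*(E) ≥ α. Then for every L ≥ 1 and every nonzero integer b there exists m with 1 ≤ m ≤ ⌊1/α^L⌋ + 1 such that {mb, 2mb, …, Lmb} ⊆ E − E. -/
/-!
If no `m ≤ M` worked, then for a window `S = E ∩ [a, a + N)` the `M + 1` translates of `S^L ⊆ ℤ^L`
by `t • (b, 2b, …, Lb)`, `0 ≤ t ≤ M`, would be pairwise disjoint: a common point of the translates
by `t < s` puts every `i (s - t) b` into `S - S`. All of them lie in a box of side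
`N + 2 M L |b|`, so `(M + 1) |S|^L ≤ (N + 2 M L |b|)^L`. Windows with `|S| > c N` for `c < α` and
arbitrarily large `N` then give `(M + 1) α^L ≤ 1`, which fails for `M = ⌊1 / α^L⌋ + 1`.
-/

open Filter Topology Finset Fintype
open scoped Pointwise

lemma frequently_exists_window_card_gt {E : Set ℤ} {c : ℝ} (hc : c < upperBanachDensity E) :
    ∃ᶠ N : ℕ in atTop, ∃ a : ℤ, c * N < (E ∩ Set.Ico a (a + N)).ncard := by
  have hnonneg (N : ℕ) : 0 ≤ ⨆ a : ℤ, ((E ∩ Set.Ico a (a + N)).ncard : ℝ) / N :=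
    Real.iSup_nonneg fun _ ↦ by positivity
  refine ((frequently_lt_of_lt_limsup (isCoboundedUnder_le_of_le atTop hnonneg) hc).and_eventually
    (eventually_gt_atTop 0)).mono fun N ⟨hcN, hN⟩ ↦ ?_
  obtain ⟨a, ha⟩ := exists_lt_of_lt_ciSup hcN
  exact ⟨a, (lt_div_iff₀ (by exact_mod_cast hN)).mp ha⟩

lemma Finset.card_mul_card_le_of_translates {ι G : Type*} [LinearOrder ι] [AddCommGroup G]
    [DecidableEq G] {A B : Finset G} {T : Finset ι} {g : ι → G}
    (hg : ∀ t ∈ T, ∀ s ∈ T, t < s → g s - g t ∉ A - A) (hB : ∀ t ∈ T, g t +ᵥ A ⊆ B) :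
    #T * #A ≤ #B := by
  have hdisj : (T : Set ι).PairwiseDisjoint fun t ↦ g t +ᵥ A := by
    have (t s) (ht : t ∈ T) (hs : s ∈ T) (hts : t < s) : Disjoint (g t +ᵥ A) (g s +ᵥ A) := by
      refine disjoint_left.mpr fun x hxt hxs ↦ hg t ht s hs hts ?_
      obtain ⟨y, hy, rfl⟩ := mem_vadd_finset.mp hxt
      obtain ⟨z, hz, hzy⟩ := mem_vadd_finset.mp hxs
      simp only [vadd_eq_add] at hzy
      have : g s - g t = y - z := by rw [eq_sub_iff_add_eq, ← add_sub_right_comm, hzy]; abel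
      exact this ▸ sub_mem_sub hy hz
    intro t ht s hs hne
    rcases hne.lt_or_gt with h | h
    exacts [this t s ht hs h, (this s t hs ht h).symm]
  calc #T * #A = #(T.biUnion fun t ↦ g t +ᵥ A) := by
        rw [card_biUnion hdisj]; simp [card_vadd_finset]
    _ ≤ #B := card_le_card (biUnion_subset.mpr hB)

lemma succ_mul_ncard_inter_Ico_pow_le {E : Set ℤ} {b : ℤ} {L M : ℕ}
    (hbad : ∀ m : ℕ, 1 ≤ m → m ≤ M → ∃ i : ℕ, 1 ≤ i ∧ i ≤ L ∧ (i : ℤ) * m * b ∉ E - E)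
    (a : ℤ) (N : ℕ) :
    (M + 1) * (E ∩ Set.Ico a (a + N)).ncard ^ L ≤ (N + 2 * M * L * b.natAbs) ^ L := by
  classical
  set S := (Finset.Ico a (a + N)).filter (· ∈ E)
  have hSE : (S : Set ℤ) ⊆ E := fun x hx ↦ (mem_filter.mp hx).2
  set K : ℤ := M * L * b.natAbs
  have key := card_mul_card_le_of_translates (T := range (M + 1)) (A := piFinset fun _ : Fin L ↦ S)
    (B := piFinset fun _ : Fin L ↦ Finset.Ico (a - K) (a + N + K))
    (g := fun t i ↦ t * (i + 1) * b) ?_ ?_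
  · have hS : E ∩ Set.Ico a (a + N) = S := by
      ext
      simp only [S, coe_filter, mem_Ico, Set.mem_inter_iff, Set.mem_Ico, Set.mem_ofPred_eq]
      tauto
    have hB : #(Finset.Ico (a - K) (a + N + K)) = N + 2 * M * L * b.natAbs := by
      rw [Int.card_Ico, show a + N + K - (a - K) = (N + 2 * M * L * b.natAbs : ℕ) by
        push_cast [K]; ring, Int.toNat_natCast]
    simpa [hS, card_piFinset_const, hB] using key
  · intro t _ s hs hts hmem
    obtain ⟨i, hi1, hiL, hi⟩ := hbad (s - t) (by omega) (by rw [mem_range] at hs; omega)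
    rw [← Fintype.piFinset_sub, Fintype.mem_piFinset] at hmem
    have hcoord : (i : ℤ) * (s - t : ℕ) * b =
        s * ((i - 1 : ℕ) + 1) * b - t * ((i - 1 : ℕ) + 1) * b := by
      push_cast [hts.le, hi1]; ring
    exact hi (hcoord ▸ Set.sub_subset_sub hSE hSE (by exact_mod_cast hmem ⟨i - 1, by omega⟩))
  · intro t ht x hx
    obtain ⟨y, hy, rfl⟩ := mem_vadd_finset.mp hx
    rw [Fintype.mem_piFinset] at hy ⊢
    intro i
    have hyi := mem_Ico.mp (mem_filter.mp (hy i)).1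
    have hshift : |(t : ℤ) * (i + 1) * b| ≤ K := by
      rw [abs_mul, abs_mul, Int.abs_eq_natAbs b]
      have : (t : ℤ) ≤ M := by rw [mem_range] at ht; omega
      have : (i : ℤ) + 1 ≤ L := by omega
      simp only [K, abs_of_nonneg (by positivity : (0 : ℤ) ≤ t),
        abs_of_nonneg (by positivity : (0 : ℤ) ≤ i + 1)]
      gcongr
    rw [abs_le] at hshift
    simp only [Pi.vadd_apply', vadd_eq_add, mem_Ico]
    constructor <;> linarith

lemma mul_pow_le_one_of_frequently {K C c : ℝ} {L : ℕ}
    (h : ∃ᶠ N : ℕ in atTop, K * (c * N) ^ L ≤ (N + C) ^ L) : K * c ^ L ≤ 1 := by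
  have hlim : Tendsto (fun N : ℕ ↦ (1 + C / N) ^ L) atTop (𝓝 1) := by
    simpa using ((tendsto_const_div_atTop_nhds_zero_nat C).const_add 1).pow L
  refine ge_of_tendsto_of_frequently hlim
    ((h.and_eventually (eventually_gt_atTop 0)).mono fun N ⟨hcN, hpos⟩ ↦ ?_)
  have hN : (0 : ℝ) < N := by exact_mod_cast hpos
  calc K * c ^ L = K * (c * N) ^ L / N ^ L := by field_simp; ring
    _ ≤ (N + C) ^ L / N ^ L := by gcongr
    _ = (1 + C / N) ^ L := by rw [← div_pow, add_div, div_self hN.ne']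

theorem succ_mul_pow_le_one_of_forall_exists_notMem_sub {E : Set ℤ} {α : ℝ} (hα : 0 < α)
    (hE : α ≤ upperBanachDensity E) {b : ℤ} {L M : ℕ}
    (hbad : ∀ m : ℕ, 1 ≤ m → m ≤ M → ∃ i : ℕ, 1 ≤ i ∧ i ≤ L ∧ (i : ℤ) * m * b ∉ E - E) :
    (M + 1) * α ^ L ≤ 1 := by
  have hc : ∀ c ∈ Set.Ioo 0 α, (M + 1 : ℝ) * c ^ L ≤ 1 := by
    rintro c ⟨hc0, hcα⟩
    refine mul_pow_le_one_of_frequently (C := 2 * M * L * b.natAbs) ?_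
    refine (frequently_exists_window_card_gt (hcα.trans_le hE)).mono fun N ⟨a, ha⟩ ↦ ?_
    calc (M + 1 : ℝ) * (c * N) ^ L ≤ (M + 1) * (E ∩ Set.Ico a (a + N)).ncard ^ L := by gcongr
      _ ≤ (N + 2 * M * L * b.natAbs) ^ L := by
        exact_mod_cast succ_mul_ncard_inter_Ico_pow_le hbad a N
  have hcont : Tendsto (fun c : ℝ ↦ (M + 1 : ℝ) * c ^ L) (𝓝[<] α) (𝓝 ((M + 1) * α ^ L)) :=
    ((continuous_const.mul (continuous_pow L)).tendsto α).mono_left nhdsWithin_le_nhds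
  exact le_of_tendsto hcont (eventually_of_mem (Ioo_mem_nhdsLT hα) hc)

theorem progression_in_difference_set_general
    (α : ℝ) (hα : 0 < α) (E : Set ℤ) (hE : α ≤ upperBanachDensity E)
    (L : ℕ) (b : ℤ) :
    ∃ m : ℕ, 1 ≤ m ∧ m ≤ Nat.floor (1 / α ^ L) + 1 ∧
      ∀ i : ℕ, 1 ≤ i → i ≤ L →
        ∃ x ∈ E, ∃ y ∈ E, (i : ℤ) * (m : ℤ) * b = x - y := by
  by_contra! hcon
  set M := Nat.floor (1 / α ^ L) + 1
  have hαL : 0 < α ^ L := pow_pos hα L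
  have hM : 1 < M * α ^ L := by
    rw [← div_lt_iff₀ hαL]
    push_cast [M]
    exact Nat.lt_floor_add_one _
  have hbad (m : ℕ) (hm : 1 ≤ m) (hmM : m ≤ M) :
      ∃ i : ℕ, 1 ≤ i ∧ i ≤ L ∧ (i : ℤ) * m * b ∉ E - E := by
    obtain ⟨i, hi1, hiL, hi⟩ := hcon m hm hmM
    exact ⟨i, hi1, hiL, fun ⟨x, hx, y, hy, hxy⟩ ↦ hi x hx y hy hxy.symm⟩
  have := succ_mul_pow_le_one_of_forall_exists_notMem_sub hα hE hbad
  linarith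

/-- For `E ⊆ ℤ` of upper Banach density at least `α > 0`, every `L ≥ 1` and
nonzero `b` admit `1 ≤ m ≤ ⌊1/α^L⌋ + 1` with `{mb, 2mb, …, Lmb} ⊆ E - E`. -/
theorem progression_in_difference_set
    (α : ℝ) (hα : 0 < α) (E : Set ℤ) (hE : α ≤ upperBanachDensity E)
    (L : ℕ) (hL : 1 ≤ L) (b : ℤ) (hb : b ≠ 0) :
    ∃ m : ℕ, 1 ≤ m ∧ m ≤ Nat.floor (1 / α ^ L) + 1 ∧
      ∀ i : ℕ, 1 ≤ i → i ≤ L →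
        ∃ x ∈ E, ∃ y ∈ E, (i : ℤ) * (m : ℤ) * b = x - y :=
  progression_in_difference_set_general α hα E hE L b
end
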